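/- arXiv:2605.06017 — 3 statements merged into one kernel-verified Lean document; each statement's English description precedes it below -/
import Mathlib

section
/- Let t > 0 and suppose Γc ≠ 0. Then the joint law ℙ satisfies the Matrix-Decoupled Concentration inequality: ℙ(|f(X) − 𝔼[f(X)]| ≥ t) ≤ 2·exp(−2t² / ‖Γc‖₂²), where ‖Γc‖₂² = Σ_{k=1}^N ((Γc)_k)² is the squared Euclidean norm of the matrix-vector product Γc. -/
open Finset

noncomputable section
set_option linter.unusedSectionVars false
set_option maxHeartbeats 1000000

/-- Total variation distance between two probability mass functions on a finite type. -/
def dTV {A : Type*} [Fintype A] (μ ν : A → ℝ) : ℝ := (∑ a, |μ a - ν a|) / 2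

/-- `p` is a family of causal transition kernels: `p j x` is the conditional distribution of the
`j`-th coordinate given the history `x`, and it only depends on the coordinates `i < j`. -/
def IsCausalKernel {N : ℕ} {A : Type*} [Fintype A]
    (p : Fin N → (Fin N → A) → A → ℝ) : Prop :=
  (∀ j x a, 0 ≤ p j x a) ∧ (∀ j x, ∑ a, p j x a = 1) ∧
    (∀ j x y, (∀ i, i < j → x i = y i) → p j x = p j y)

/-- The joint law on `A^N` induced by the chain rule `ℙ(x) = ∏_j p_j(x_j | x_{1:j-1})`. -/
def jointLaw {N : ℕ} {A : Type*} [Fintype A]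
    (p : Fin N → (Fin N → A) → A → ℝ) : (Fin N → A) → ℝ :=
  fun x => ∏ j, p j x (x j)

/-- Expectation of `f` under the (finitely supported) law `P`. -/
def expVal {N : ℕ} {A : Type*} [Fintype A] (P f : (Fin N → A) → ℝ) : ℝ := ∑ x, P x * f x

/-- The causal interdependence matrix: `H i j` is the maximal total-variation shift of the
kernel at step `j` caused by modifying coordinate `i` of the history (all other coordinates
before `j` held fixed); it vanishes for `i ≥ j`. -/
def Hmat {N : ℕ} {A : Type*} [Fintype A]
    (p : Fin N → (Fin N → A) → A → ℝ) : Matrix (Fin N) (Fin N) ℝ := fun i j =>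
  if i < j then
    ⨆ q : {q : (Fin N → A) × (Fin N → A) // ∀ m, m < j → m ≠ i → q.1 m = q.2 m},
      dTV (p j q.1.1) (p j q.1.2)
  else 0

/-- The causal causalResolvent `Γ = (I - H)⁻¹`. -/
def causalResolvent {N : ℕ} (H : Matrix (Fin N) (Fin N) ℝ) : Matrix (Fin N) (Fin N) ℝ :=
  (1 - H)⁻¹

/-- `f` admits the (nonnegative) sensitivity vector `c`. -/
def HasSensitivity {N : ℕ} {A : Type*} [DecidableEq A] [Fintype A]
    (f : (Fin N → A) → ℝ) (c : Fin N → ℝ) : Prop :=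
  (∀ j, 0 ≤ c j) ∧ ∀ x y, |f x - f y| ≤ ∑ j, if x j ≠ y j then c j else 0

namespace MDC

variable {N : ℕ} {A : Type*} [Fintype A] [Nonempty A] [DecidableEq A]



lemma dTV_nonneg (μ ν : A → ℝ) : 0 ≤ dTV μ ν := by
  have : 0 ≤ ∑ a, |μ a - ν a| := Finset.sum_nonneg fun a _ => abs_nonneg _
  simpa [dTV] using by linarith

lemma dTV_le_one {μ ν : A → ℝ} (hμ0 : ∀ a, 0 ≤ μ a) (hν0 : ∀ a, 0 ≤ ν a)
    (hμ : ∑ a, μ a = 1) (hν : ∑ a, ν a = 1) : dTV μ ν ≤ 1 := by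
  have h : ∑ a, |μ a - ν a| ≤ ∑ a, (μ a + ν a) := by
    refine Finset.sum_le_sum fun a _ => ?_
    have := abs_sub (μ a) (ν a)
    calc |μ a - ν a| ≤ |μ a| + |ν a| := abs_sub _ _
      _ = μ a + ν a := by rw [abs_of_nonneg (hμ0 a), abs_of_nonneg (hν0 a)]
  have h2 : ∑ a, (μ a + ν a) = 2 := by rw [Finset.sum_add_distrib, hμ, hν]; norm_num
  rw [dTV]; linarith

/-- midpoint trick -/
lemma abs_sum_mul_le_dTV (μ ν : A → ℝ) (hμ : ∑ a, μ a = 1) (hν : ∑ a, ν a = 1)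
    (g : A → ℝ) (D : ℝ) (hD : ∀ a b, |g a - g b| ≤ D) :
    |∑ a, (μ a - ν a) * g a| ≤ dTV μ ν * D := by
  classical
  obtain ⟨a₁, -, hmax⟩ := Finset.exists_max_image (univ : Finset A) g ⟨Classical.arbitrary A, mem_univ _⟩
  obtain ⟨a₂, -, hmin⟩ := Finset.exists_min_image (univ : Finset A) g ⟨Classical.arbitrary A, mem_univ _⟩
  set m : ℝ := (g a₁ + g a₂) / 2 with hm
  have hgm : ∀ a, |g a - m| ≤ D / 2 := by
    intro a
    have h1 : g a ≤ g a₁ := hmax a (mem_univ a)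
    have h2 : g a₂ ≤ g a := hmin a (mem_univ a)
    have h3 : g a₁ - g a₂ ≤ D := by
      have := hD a₁ a₂
      calc g a₁ - g a₂ ≤ |g a₁ - g a₂| := le_abs_self _
        _ ≤ D := this
    rw [abs_le]; constructor <;> [skip; skip] <;> simp [hm] <;> linarith
  have key : ∑ a, (μ a - ν a) * g a = ∑ a, (μ a - ν a) * (g a - m) := by
    have : ∑ a, (μ a - ν a) * (g a - m) = ∑ a, (μ a - ν a) * g a - (∑ a, μ a - ∑ a, ν a) * m := by
      rw [← Finset.sum_sub_distrib, Finset.sum_mul, ← Finset.sum_sub_distrib]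
      exact Finset.sum_congr rfl fun a _ => by ring
    rw [this, hμ, hν]; ring
  rw [key]
  calc |∑ a, (μ a - ν a) * (g a - m)| ≤ ∑ a, |(μ a - ν a) * (g a - m)| :=
        Finset.abs_sum_le_sum_abs _ _
    _ ≤ ∑ a, |μ a - ν a| * (D / 2) := by
        refine Finset.sum_le_sum fun a _ => ?_
        rw [abs_mul]
        exact mul_le_mul_of_nonneg_left (hgm a) (abs_nonneg _)
    _ = dTV μ ν * D := by rw [← Finset.sum_mul, dTV]; ring


variable {p : Fin N → (Fin N → A) → A → ℝ}



lemma bddAbove_dTV (hp : IsCausalKernel p) (i j : Fin N) :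
    BddAbove (Set.range fun q : {q : (Fin N → A) × (Fin N → A) //
      ∀ m, m < j → m ≠ i → q.1 m = q.2 m} => dTV (p j q.1.1) (p j q.1.2)) := by
  refine ⟨1, ?_⟩
  rintro _ ⟨q, rfl⟩
  exact dTV_le_one (hp.1 j q.1.1) (hp.1 j q.1.2) (hp.2.1 j q.1.1) (hp.2.1 j q.1.2)

lemma Hmat_nonneg (hp : IsCausalKernel p) (i j : Fin N) : 0 ≤ Hmat p i j := by
  unfold Hmat
  by_cases h : i < j
  · rw [if_pos h]
    have := le_ciSup (bddAbove_dTV hp i j)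
      (⟨(Classical.arbitrary _, Classical.arbitrary _), by
        rintro m _ _; rfl⟩ : {q : (Fin N → A) × (Fin N → A) //
          ∀ m, m < j → m ≠ i → q.1 m = q.2 m})
    refine le_trans (le_of_eq ?_) this
    simp [dTV]
  · rw [if_neg h]

lemma dTV_le_Hmat (hp : IsCausalKernel p) {i j : Fin N} (hij : i < j)
    (x x' : Fin N → A) (hxx' : ∀ m, m ≠ i → x m = x' m) :
    dTV (p j x) (p j x') ≤ Hmat p i j := by
  unfold Hmat
  rw [if_pos hij]
  exact le_ciSup (bddAbove_dTV hp i j)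
    (⟨(x, x'), fun m _ hmi => hxx' m hmi⟩ : {q : (Fin N → A) × (Fin N → A) //
      ∀ m, m < j → m ≠ i → q.1 m = q.2 m})

lemma Hmat_eq_zero {i j : Fin N} (h : ¬ i < j) : Hmat p i j = 0 := by
  unfold Hmat; rw [if_neg h]

lemma resolvent_eq : causalResolvent (Hmat p) = 1 + Hmat p * causalResolvent (Hmat p) := by
  set H := Hmat p
  have hBT : (1 - H).BlockTriangular id := by
    intro i j hij
    have h1 : (1 : Matrix (Fin N) (Fin N) ℝ) i j = 0 := by
      apply Matrix.one_apply_ne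
      exact fun h => absurd h (by simp at hij ⊢; omega)
    have h2 : H i j = 0 := Hmat_eq_zero (by simp at hij ⊢; omega)
    simp [Matrix.sub_apply, h1, h2]
  have hdet : (1 - H).det = 1 := by
    rw [Matrix.det_of_upperTriangular hBT]
    apply Finset.prod_eq_one
    intro i _
    have h2 : H i i = 0 := Hmat_eq_zero (lt_irrefl i)
    simp [Matrix.sub_apply, h2]
  have hunit : IsUnit (1 - H).det := by rw [hdet]; exact isUnit_one
  have hmul : (1 - H) * (1 - H)⁻¹ = 1 := Matrix.mul_nonsing_inv _ hunit
  have : (1 - H) * causalResolvent H = 1 := hmul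
  rw [sub_mul, one_mul] at this
  rw [← this, sub_add_cancel]

lemma gammaVec_eq (c : Fin N → ℝ) :
    (causalResolvent (Hmat p)).mulVec c =
      c + (Hmat p).mulVec ((causalResolvent (Hmat p)).mulVec c) := by
  conv_lhs => rw [resolvent_eq]
  rw [Matrix.add_mulVec, Matrix.one_mulVec, ← Matrix.mulVec_mulVec]

lemma gammaVec_apply (c : Fin N → ℝ) (j : Fin N) :
    (causalResolvent (Hmat p)).mulVec c j =
      c j + ∑ k, Hmat p j k * (causalResolvent (Hmat p)).mulVec c k := by
  have h := congrFun (gammaVec_eq (p := p) c) j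
  simp only [Matrix.mulVec, dotProduct, Pi.add_apply, Matrix.mul_apply,
    Finset.sum_mul, mul_assoc] at h ⊢
  rw [h]

lemma gammaVec_nonneg (hp : IsCausalKernel p) {c : Fin N → ℝ} (hc : ∀ j, 0 ≤ c j) (j : Fin N) :
    0 ≤ (causalResolvent (Hmat p)).mulVec c j := by
  set Γc := (causalResolvent (Hmat p)).mulVec c with hΓc
  suffices h : ∀ d (j : Fin N), N - (j : ℕ) ≤ d → 0 ≤ Γc j by
    exact h N j (by omega)
  intro d
  induction d with
  | zero => intro j hj; exfalso; have := j.isLt; omega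
  | succ d ih =>
    intro j hj
    rw [hΓc, gammaVec_apply]
    have hsum : 0 ≤ ∑ k, Hmat p j k * Γc k := by
      apply Finset.sum_nonneg
      intro k _
      by_cases hk : j < k
      · have hk' : (j : ℕ) < (k : ℕ) := hk
        exact mul_nonneg (Hmat_nonneg hp j k) (ih k (by omega))
      · rw [Hmat_eq_zero hk]; simp
    have := hc j
    rw [← hΓc]  -- ?
    exact add_nonneg (hc j) hsum



/-- If `F 0 = 0` and `F' ≤ 0` on `[0,∞)`, then `F ≤ 0` on `[0,∞)`. -/
lemma nonpos_of_deriv_nonpos {F F' : ℝ → ℝ} (hF : ∀ x, HasDerivAt F (F' x) x)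
    (h0 : F 0 = 0) (hF' : ∀ x, 0 ≤ x → F' x ≤ 0) : ∀ h, 0 ≤ h → F h ≤ 0 := by
  intro h hh
  have hanti : AntitoneOn F (Set.Ici (0 : ℝ)) := by
    apply antitoneOn_of_deriv_nonpos (convex_Ici 0)
    · exact fun x _ => (hF x).continuousAt.continuousWithinAt
    · exact fun x _ => (hF x).differentiableAt.differentiableWithinAt
    · intro x hx
      rw [interior_Ici] at hx
      rw [(hF x).deriv]
      exact hF' x (le_of_lt hx)
  calc F h ≤ F 0 := hanti (Set.self_mem_Ici) hh hh
    _ = 0 := h0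

lemma hoeffding_core {θ : ℝ} (hθ0 : 0 ≤ θ) (hθ1 : θ ≤ 1) {h : ℝ} (hh : 0 ≤ h) :
    (1 - θ) + θ * Real.exp h ≤ Real.exp (θ * h + h ^ 2 / 8) := by
  set D : ℝ → ℝ := fun x => (1 - θ) + θ * Real.exp x with hD
  have hDpos : ∀ x, 0 < D x := by
    intro x
    rcases eq_or_lt_of_le hθ0 with h0 | h0
    · simp [hD, ← h0]
    · have : 0 < θ * Real.exp x := mul_pos h0 (Real.exp_pos x)
      have : (0:ℝ) ≤ 1 - θ := by linarith
      simp only [hD]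
      nlinarith [Real.exp_pos x, mul_pos h0 (Real.exp_pos x)]
  set u : ℝ → ℝ := fun x => θ * Real.exp x / D x with hu
  have hu01 : ∀ x, 0 ≤ u x ∧ u x ≤ 1 := by
    intro x
    constructor
    · exact div_nonneg (mul_nonneg hθ0 (Real.exp_pos x).le) (hDpos x).le
    · rw [hu, div_le_one (hDpos x)]
      simp only [hD]
      linarith
  have hDderiv : ∀ x, HasDerivAt D (θ * Real.exp x) x := by
    intro x
    have h1 : HasDerivAt (fun x => θ * Real.exp x) (θ * Real.exp x) x :=
      (Real.hasDerivAt_exp x).const_mul θ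
    simpa [hD] using (h1.const_add (1 - θ))
  have halg : ∀ t d : ℝ, d ≠ 0 → t / d * (1 - t / d) = (t * d - t * t) / d ^ 2 := by
    intro t d hd; field_simp
  have huderiv : ∀ x, HasDerivAt u (u x * (1 - u x)) x := by
    intro x
    have h1 : HasDerivAt (fun x => θ * Real.exp x) (θ * Real.exp x) x :=
      (Real.hasDerivAt_exp x).const_mul θ
    have h2 := h1.div (hDderiv x) (hDpos x).ne'
    have h3 : u x * (1 - u x) = (θ * Real.exp x * D x - θ * Real.exp x * (θ * Real.exp x)) / D x ^ 2 :=
      halg (θ * Real.exp x) (D x) (hDpos x).ne'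
    rw [h3]
    exact h2
  -- step 1: F1 := u - θ - x/4 ≤ 0 on [0, ∞)
  set F1 : ℝ → ℝ := fun x => u x - θ - x / 4 with hF1
  have hF1deriv : ∀ x, HasDerivAt F1 (u x * (1 - u x) - 1 / 4) x := by
    intro x
    have := ((huderiv x).sub_const θ).sub ((hasDerivAt_id x).div_const 4)
    exact this
  have hF1zero : F1 0 = 0 := by
    simp only [hF1, hu, hD]
    rw [Real.exp_zero]
    have : (1 : ℝ) - θ + θ * 1 = 1 := by ring
    rw [this]
    ring
  have hF1nonpos : ∀ x, 0 ≤ x → F1 x ≤ 0 := by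
    apply nonpos_of_deriv_nonpos hF1deriv hF1zero
    intro x _
    obtain ⟨h1, h2⟩ := hu01 x
    nlinarith [sq_nonneg (u x - 1 / 2)]
  -- step 2: F0 := log (D x) - θ x - x²/8 ≤ 0 on [0, ∞)
  set F0 : ℝ → ℝ := fun x => Real.log (D x) - θ * x - x ^ 2 / 8 with hF0
  have hF0deriv : ∀ x, HasDerivAt F0 (F1 x) x := by
    intro x
    have h1 : HasDerivAt (fun x => Real.log (D x)) (θ * Real.exp x / D x) x :=
      (hDderiv x).log (hDpos x).ne'
    have h2 := (h1.sub ((hasDerivAt_id x).const_mul θ)).sub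
      (((hasDerivAt_id x).pow 2).div_const 8)
    have h3 : F1 x = θ * Real.exp x / D x - (θ * 1) - 2 * x ^ (2 - 1) * 1 / 8 := by
      simp only [hF1, hu]
      norm_num
      ring
    rw [h3]
    exact h2
  have hF0zero : F0 0 = 0 := by
    simp only [hF0, hD]
    rw [Real.exp_zero]
    have : (1 : ℝ) - θ + θ * 1 = 1 := by ring
    rw [this, Real.log_one]
    ring
  have hF0nonpos : F0 h ≤ 0 :=
    nonpos_of_deriv_nonpos hF0deriv hF0zero (fun x hx => hF1nonpos x hx) h hh
  have hlog : Real.log (D h) ≤ θ * h + h ^ 2 / 8 := by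
    simp only [hF0] at hF0nonpos
    linarith
  calc D h = Real.exp (Real.log (D h)) := (Real.exp_log (hDpos h)).symm
    _ ≤ Real.exp (θ * h + h ^ 2 / 8) := Real.exp_le_exp.mpr hlog

/-- Discrete Hoeffding lemma. -/
lemma hoeffding_discrete {A : Type*} [Fintype A] [Nonempty A] (q : A → ℝ)
    (hq0 : ∀ a, 0 ≤ q a) (hq1 : ∑ a, q a = 1) (g : A → ℝ) (D lam : ℝ) (hlam : 0 ≤ lam)
    (hD : ∀ a b, |g a - g b| ≤ D) :
    ∑ a, q a * Real.exp (lam * g a) ≤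
      Real.exp (lam * (∑ a, q a * g a) + lam ^ 2 * D ^ 2 / 8) := by
  classical
  obtain ⟨a₁, -, hmax⟩ := Finset.exists_max_image (univ : Finset A) g
    ⟨Classical.arbitrary A, mem_univ _⟩
  obtain ⟨a₂, -, hmin⟩ := Finset.exists_min_image (univ : Finset A) g
    ⟨Classical.arbitrary A, mem_univ _⟩
  set hi := g a₁ with hhi
  set lo := g a₂ with hlo
  set m := ∑ a, q a * g a with hm
  have hglo : ∀ a, lo ≤ g a := fun a => hmin a (mem_univ a)
  have hghi : ∀ a, g a ≤ hi := fun a => hmax a (mem_univ a)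
  have hlohi : lo ≤ hi := le_trans (hglo a₁) (le_refl _)
  have hDnn : 0 ≤ D := le_trans (abs_nonneg _) (hD a₁ a₂)
  have hrange : hi - lo ≤ D := le_trans (le_abs_self _) (hD a₁ a₂)
  have hmlo : lo ≤ m := by
    rw [hm]
    calc lo = ∑ a, q a * lo := by rw [← Finset.sum_mul, hq1, one_mul]
      _ ≤ ∑ a, q a * g a :=
        Finset.sum_le_sum fun a _ => mul_le_mul_of_nonneg_left (hglo a) (hq0 a)
  have hmhi : m ≤ hi := by
    rw [hm]
    calc ∑ a, q a * g a ≤ ∑ a, q a * hi :=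
        Finset.sum_le_sum fun a _ => mul_le_mul_of_nonneg_left (hghi a) (hq0 a)
      _ = hi := by rw [← Finset.sum_mul, hq1, one_mul]
  rcases eq_or_lt_of_le hlohi with heq | hlt
  · -- degenerate: g is constant
    have hgc : ∀ a, g a = lo := fun a => le_antisymm (heq ▸ hghi a) (hglo a)
    have hmc : m = lo := by
      rw [hm]
      calc ∑ a, q a * g a = ∑ a, q a * lo := by
            refine Finset.sum_congr rfl fun a _ => by rw [hgc a]
        _ = lo := by rw [← Finset.sum_mul, hq1, one_mul]
    calc ∑ a, q a * Real.exp (lam * g a) = ∑ a, q a * Real.exp (lam * lo) := by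
          refine Finset.sum_congr rfl fun a _ => by rw [hgc a]
      _ = Real.exp (lam * lo) := by rw [← Finset.sum_mul, hq1, one_mul]
      _ ≤ Real.exp (lam * m + lam ^ 2 * D ^ 2 / 8) := by
          apply Real.exp_le_exp.mpr
          rw [hmc]
          nlinarith [sq_nonneg lam, sq_nonneg D]
  · -- nondegenerate
    set θ := (m - lo) / (hi - lo) with hθ
    have hθ0 : 0 ≤ θ := div_nonneg (by linarith) (by linarith)
    have hθ1 : θ ≤ 1 := by
      rw [hθ, div_le_one (by linarith)]
      linarith
    have hne : hi - lo ≠ 0 := (sub_pos.mpr hlt).ne'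
    set hstep := lam * (hi - lo) with hhstep
    have hhstep0 : 0 ≤ hstep := mul_nonneg hlam (by linarith)
    -- convexity bound on each exp
    have hconv : ∀ a, Real.exp (lam * g a) ≤
        (hi - g a) / (hi - lo) * Real.exp (lam * lo) +
        (g a - lo) / (hi - lo) * Real.exp (lam * hi) := by
      intro a
      have w1 : (0:ℝ) ≤ (hi - g a) / (hi - lo) := div_nonneg (by linarith [hghi a]) (by linarith)
      have w2 : (0:ℝ) ≤ (g a - lo) / (hi - lo) := div_nonneg (by linarith [hglo a]) (by linarith)
      have wsum : (hi - g a) / (hi - lo) + (g a - lo) / (hi - lo) = 1 := by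
        rw [← add_div]
        have : hi - g a + (g a - lo) = hi - lo := by ring
        rw [this, div_self hne]
      have := convexOn_exp.2 (Set.mem_univ (lam * lo)) (Set.mem_univ (lam * hi)) w1 w2 wsum
      have harg : ((hi - g a) / (hi - lo)) • (lam * lo) + ((g a - lo) / (hi - lo)) • (lam * hi)
          = lam * g a := by
        simp only [smul_eq_mul]
        field_simp
        ring
      rw [harg] at this
      simpa [smul_eq_mul] using this
    have hsum : ∑ a, q a * Real.exp (lam * g a) ≤
        (hi - m) / (hi - lo) * Real.exp (lam * lo) +
        (m - lo) / (hi - lo) * Real.exp (lam * hi) := by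
      calc ∑ a, q a * Real.exp (lam * g a)
          ≤ ∑ a, q a * ((hi - g a) / (hi - lo) * Real.exp (lam * lo) +
              (g a - lo) / (hi - lo) * Real.exp (lam * hi)) :=
            Finset.sum_le_sum fun a _ => mul_le_mul_of_nonneg_left (hconv a) (hq0 a)
        _ = (hi - m) / (hi - lo) * Real.exp (lam * lo) +
              (m - lo) / (hi - lo) * Real.exp (lam * hi) := by
            have s1 : ∑ a, q a * hi = hi := by rw [← Finset.sum_mul, hq1, one_mul]
            have s2 : ∑ a, q a * lo = lo := by rw [← Finset.sum_mul, hq1, one_mul]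
            have e1 : ∀ a : A, q a * ((hi - g a) / (hi - lo) * Real.exp (lam * lo) +
                (g a - lo) / (hi - lo) * Real.exp (lam * hi))
              = (q a * hi - q a * g a) * ((hi - lo)⁻¹ * Real.exp (lam * lo))
                + (q a * g a - q a * lo) * ((hi - lo)⁻¹ * Real.exp (lam * hi)) := by
              intro a; field_simp
            rw [Finset.sum_congr rfl (fun a _ => e1 a), Finset.sum_add_distrib,
              ← Finset.sum_mul, ← Finset.sum_mul, Finset.sum_sub_distrib,
              Finset.sum_sub_distrib, s1, s2, ← hm]
            ring
    have hkey : (hi - m) / (hi - lo) * Real.exp (lam * lo) +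
        (m - lo) / (hi - lo) * Real.exp (lam * hi) =
        Real.exp (lam * lo) * ((1 - θ) + θ * Real.exp hstep) := by
      have h1 : Real.exp (lam * hi) = Real.exp (lam * lo) * Real.exp hstep := by
        rw [← Real.exp_add]
        congr 1
        rw [hhstep]; ring
      have h2 : (hi - m) / (hi - lo) = 1 - θ := by
        rw [hθ]
        field_simp
        ring
      rw [h1, h2, hθ]; ring
    have hcore := hoeffding_core hθ0 hθ1 hhstep0
    have hfin : Real.exp (lam * lo) * ((1 - θ) + θ * Real.exp hstep) ≤
        Real.exp (lam * m + lam ^ 2 * D ^ 2 / 8) := by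
      calc Real.exp (lam * lo) * ((1 - θ) + θ * Real.exp hstep)
          ≤ Real.exp (lam * lo) * Real.exp (θ * hstep + hstep ^ 2 / 8) :=
            mul_le_mul_of_nonneg_left hcore (Real.exp_pos _).le
        _ = Real.exp (lam * lo + θ * hstep + hstep ^ 2 / 8) := by
            rw [← Real.exp_add]; ring_nf
        _ ≤ Real.exp (lam * m + lam ^ 2 * D ^ 2 / 8) := by
            apply Real.exp_le_exp.mpr
            have hth : θ * hstep = lam * (m - lo) := by
              rw [hθ, hhstep]
              field_simp
            have hsq : hstep ^ 2 ≤ lam ^ 2 * D ^ 2 := by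
              rw [hhstep, mul_pow]
              have : (hi - lo) ^ 2 ≤ D ^ 2 := by nlinarith
              nlinarith [sq_nonneg lam]
            rw [hth]
            linarith
    calc ∑ a, q a * Real.exp (lam * g a) ≤ _ := hsum
      _ = _ := hkey
      _ ≤ _ := hfin




/-- Iterated conditional expectation: `G p φ j x` is `E[φ(X) | X_i = x_i for i < j]`. -/
def G (p : Fin N → (Fin N → A) → A → ℝ) (φ : (Fin N → A) → ℝ) (j : ℕ) (x : Fin N → A) : ℝ :=
  if h : j < N then ∑ a, p ⟨j, h⟩ x a * G p φ (j + 1) (Function.update x ⟨j, h⟩ a)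
  else φ x
termination_by N - j


lemma G_of_lt (φ : (Fin N → A) → ℝ) {j : ℕ} (h : j < N) (x : Fin N → A) :
    G p φ j x = ∑ a, p ⟨j, h⟩ x a * G p φ (j + 1) (Function.update x ⟨j, h⟩ a) := by
  rw [G, dif_pos h]

lemma G_of_ge (φ : (Fin N → A) → ℝ) {j : ℕ} (h : ¬ j < N) (x : Fin N → A) :
    G p φ j x = φ x := by
  rw [G, dif_neg h]

lemma sum_if_split (g : Fin N → ℝ) {j : ℕ} (h : j < N) :
    (∑ k : Fin N, if j ≤ (k : ℕ) then g k else 0) = g ⟨j, h⟩ + ∑ k : Fin N, if j + 1 ≤ (k : ℕ) then g k else 0 := by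
  rw [← Finset.sum_filter, ← Finset.sum_filter]
  have hins : (univ.filter fun k : Fin N => j ≤ (k : ℕ)) =
      insert ⟨j, h⟩ (univ.filter fun k : Fin N => j + 1 ≤ (k : ℕ)) := by
    ext k
    simp only [mem_filter, mem_univ, true_and, mem_insert, Fin.ext_iff]
    omega
  rw [hins, Finset.sum_insert (by simp)]

lemma prod_if_split (g : Fin N → ℝ) {j : ℕ} (h : j < N) :
    (∏ k : Fin N, if j ≤ (k : ℕ) then g k else 1) = g ⟨j, h⟩ * ∏ k : Fin N, if j + 1 ≤ (k : ℕ) then g k else 1 := by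
  rw [← Finset.prod_filter, ← Finset.prod_filter]
  have hins : (univ.filter fun k : Fin N => j ≤ (k : ℕ)) =
      insert ⟨j, h⟩ (univ.filter fun k : Fin N => j + 1 ≤ (k : ℕ)) := by
    ext k
    simp only [mem_filter, mem_univ, true_and, mem_insert, Fin.ext_iff]
    omega
  rw [hins, Finset.prod_insert (by simp)]

lemma G_congr (hp : IsCausalKernel p) (φ : (Fin N → A) → ℝ) :
    ∀ d j, N ≤ j + d → ∀ x y : Fin N → A, (∀ i : Fin N, (i : ℕ) < j → x i = y i) →
      G p φ j x = G p φ j y := by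
  intro d
  induction d with
  | zero =>
    intro j hj x y hxy
    have hx : x = y := funext fun i => hxy i (by omega)
    rw [hx]
  | succ d ih =>
    intro j hj x y hxy
    by_cases h : j < N
    · rw [G_of_lt φ h, G_of_lt φ h]
      have hker : p ⟨j, h⟩ x = p ⟨j, h⟩ y := by
        apply hp.2.2
        intro i hi
        exact hxy i hi
      refine Finset.sum_congr rfl fun a _ => ?_
      rw [hker]
      congr 1
      refine ih (j + 1) (by omega) _ _ fun i hi => ?_
      by_cases hij : i = ⟨j, h⟩
      · subst hij; simp
      · rw [Function.update_of_ne hij, Function.update_of_ne hij]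
        exact hxy i (by
          have : (i : ℕ) ≠ j := fun hc => hij (Fin.ext hc)
          omega)
    · rw [G_of_ge φ h, G_of_ge φ h]
      have hx : x = y := funext fun i => hxy i (by omega; )
      rw [hx]

lemma G_congr' (hp : IsCausalKernel p) (φ : (Fin N → A) → ℝ) (j : ℕ) (x y : Fin N → A)
    (hxy : ∀ i : Fin N, (i : ℕ) < j → x i = y i) : G p φ j x = G p φ j y :=
  G_congr hp φ N j (by omega) x y hxy

/-- Tower identity for `G`. -/
lemma G_sum (hp : IsCausalKernel p) (φ : (Fin N → A) → ℝ) :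
    ∀ d j, N ≤ j + d → ∀ x : Fin N → A,
      ∑ y ∈ univ.filter (fun y : Fin N → A => ∀ i : Fin N, (i : ℕ) < j → y i = x i),
        (∏ k : Fin N, if j ≤ (k : ℕ) then p k y (y k) else 1) * φ y = G p φ j x := by
  intro d
  induction d with
  | zero =>
    intro j hj x
    have hfilt : (univ.filter fun y : Fin N → A => ∀ i : Fin N, (i : ℕ) < j → y i = x i) = {x} := by
      ext y
      simp only [mem_filter, mem_univ, true_and, mem_singleton]
      constructor
      · intro hy; exact funext fun i => hy i (by omega)
      · intro hy; subst hy; exact fun i _ => rfl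
    rw [hfilt, Finset.sum_singleton]
    have hprod : (∏ k : Fin N, if j ≤ (k : ℕ) then p k x (x k) else 1) = 1 := by
      apply Finset.prod_eq_one
      intro k _
      rw [if_neg (by omega)]
    rw [hprod, one_mul, G_of_ge φ (by omega)]
  | succ d ih =>
    intro j hj x
    by_cases h : j < N
    · set j₀ : Fin N := ⟨j, h⟩ with hj₀
      rw [G_of_lt φ h]
      -- group the sum by the value at coordinate j₀
      rw [← Finset.sum_fiberwise_of_maps_to (g := fun y : Fin N → A => y j₀)
        (t := (univ : Finset A)) (fun y _ => mem_univ _)]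
      refine Finset.sum_congr rfl fun a _ => ?_
      have hfib : ((univ.filter fun y : Fin N → A => ∀ i : Fin N, (i : ℕ) < j → y i = x i).filter
          fun y => y j₀ = a) =
          univ.filter (fun y : Fin N → A => ∀ i : Fin N, (i : ℕ) < j + 1 →
            y i = Function.update x j₀ a i) := by
        ext y
        simp only [mem_filter, mem_univ, true_and]
        constructor
        · rintro ⟨h1, h2⟩ i hi
          by_cases hij : i = j₀
          · subst hij; simp [h2]
          · rw [Function.update_of_ne hij]
            exact h1 i (by
              have : (i : ℕ) ≠ j := fun hc => hij (Fin.ext hc)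
              omega)
        · intro h1
          constructor
          · intro i hi
            have hij : i ≠ j₀ := fun hc => by
              rw [hc] at hi; simp [hj₀] at hi
            have := h1 i (by omega)
            rwa [Function.update_of_ne hij] at this
          · have := h1 j₀ (by simp [hj₀])
            simpa using this
      rw [hfib]
      rw [← ih (j + 1) (by omega) (Function.update x j₀ a)]
      rw [Finset.mul_sum]
      refine Finset.sum_congr rfl fun y hy => ?_
      simp only [mem_filter, mem_univ, true_and] at hy
      have hyj : y j₀ = a := by
        have := hy j₀ (by simp [hj₀])
        simpa using this
      have hker : p j₀ y = p j₀ x := by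
        apply hp.2.2
        intro i hi
        have hij : i ≠ j₀ := Fin.ne_of_lt hi
        have := hy i (by
          have : (i : ℕ) < j := hi
          omega)
        rw [Function.update_of_ne hij] at this
        exact this
      rw [prod_if_split (fun k => p k y (y k)) h]
      rw [hker, hyj]
      ring
    · -- j ≥ N: same as base case
      have hfilt : (univ.filter fun y : Fin N → A => ∀ i : Fin N, (i : ℕ) < j → y i = x i) = {x} := by
        ext y
        simp only [mem_filter, mem_univ, true_and, mem_singleton]
        constructor
        · intro hy; exact funext fun i => hy i (by omega)
        · intro hy; subst hy; exact fun i _ => rfl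
      rw [hfilt, Finset.sum_singleton]
      have hprod : (∏ k : Fin N, if j ≤ (k : ℕ) then p k x (x k) else 1) = 1 := by
        apply Finset.prod_eq_one
        intro k _
        rw [if_neg (by omega)]
      rw [hprod, one_mul, G_of_ge φ h]

lemma G_sum' (hp : IsCausalKernel p) (φ : (Fin N → A) → ℝ) (j : ℕ) (x : Fin N → A) :
    ∑ y ∈ univ.filter (fun y : Fin N → A => ∀ i : Fin N, (i : ℕ) < j → y i = x i),
      (∏ k : Fin N, if j ≤ (k : ℕ) then p k y (y k) else 1) * φ y = G p φ j x :=
  G_sum hp φ N j (by omega) x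

lemma G_zero_eq (hp : IsCausalKernel p) (φ : (Fin N → A) → ℝ) (x : Fin N → A) :
    G p φ 0 x = ∑ y, jointLaw p y * φ y := by
  rw [← G_sum' hp φ 0 x]
  have h1 : (univ.filter fun y : Fin N → A => ∀ i : Fin N, (i : ℕ) < 0 → y i = x i) = univ := by
    apply Finset.filter_true_of_mem
    intro y _
    exact fun i hi => absurd hi (by omega)
  rw [h1]
  refine Finset.sum_congr rfl fun y _ => ?_
  congr 1



section Main

variable {p : Fin N → (Fin N → A) → A → ℝ} {f : (Fin N → A) → ℝ} {c : Fin N → ℝ}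

/-- The central oscillation estimate: changing coordinate `i < j` of the history changes the
conditional expectation at level `j` by at most `c i + ∑_{k ≥ j} H i k (Γc)_k`. -/
lemma G_osc (hp : IsCausalKernel p) (hf : HasSensitivity f c) :
    ∀ d j, N ≤ j + d → ∀ (i : Fin N) (x x' : Fin N → A), (i : ℕ) < j →
      (∀ m : Fin N, m ≠ i → x m = x' m) →
      |G p f j x - G p f j x'| ≤ c i + ∑ k : Fin N,
        if j ≤ (k : ℕ) then Hmat p i k * (causalResolvent (Hmat p)).mulVec c k else 0 := by
  intro d
  induction d with
  | zero =>
    intro j hj i x x' hij hxx'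
    rw [G_of_ge f (by omega), G_of_ge f (by omega)]
    have h1 : |f x - f x'| ≤ c i := by
      refine le_trans (hf.2 x x') ?_
      have h2 : ∑ m : Fin N, (if x m ≠ x' m then c m else 0) =
          if x i ≠ x' i then c i else 0 := by
        apply Finset.sum_eq_single i
        · intro m _ hmi
          rw [if_neg]
          simp [hxx' m hmi]
        · intro hi; exact absurd (mem_univ i) hi
      rw [h2]
      by_cases hc : x i ≠ x' i
      · rw [if_pos hc]
      · rw [if_neg hc]; exact hf.1 i
    have h2 : 0 ≤ ∑ k : Fin N,
        if j ≤ (k : ℕ) then Hmat p i k * (causalResolvent (Hmat p)).mulVec c k else 0 := by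
      apply Finset.sum_nonneg
      intro k _
      by_cases hk : j ≤ (k : ℕ)
      · rw [if_pos hk]
        exact mul_nonneg (Hmat_nonneg hp i k) (gammaVec_nonneg hp hf.1 k)
      · rw [if_neg hk]
    linarith
  | succ d ih =>
    intro j hj i x x' hij hxx'
    by_cases h : j < N
    swap
    · -- j ≥ N : same as base case
      rw [G_of_ge f h, G_of_ge f h]
      have h1 : |f x - f x'| ≤ c i := by
        refine le_trans (hf.2 x x') ?_
        have h2 : ∑ m : Fin N, (if x m ≠ x' m then c m else 0) =
            if x i ≠ x' i then c i else 0 := by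
          apply Finset.sum_eq_single i
          · intro m _ hmi
            rw [if_neg]
            simp [hxx' m hmi]
          · intro hi; exact absurd (mem_univ i) hi
        rw [h2]
        by_cases hc : x i ≠ x' i
        · rw [if_pos hc]
        · rw [if_neg hc]; exact hf.1 i
      have h2 : 0 ≤ ∑ k : Fin N,
          if j ≤ (k : ℕ) then Hmat p i k * (causalResolvent (Hmat p)).mulVec c k else 0 := by
        apply Finset.sum_nonneg
        intro k _
        by_cases hk : j ≤ (k : ℕ)
        · rw [if_pos hk]
          exact mul_nonneg (Hmat_nonneg hp i k) (gammaVec_nonneg hp hf.1 k)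
        · rw [if_neg hk]
      linarith
    set j₀ : Fin N := ⟨j, h⟩ with hj₀
    set Γc := (causalResolvent (Hmat p)).mulVec c with hΓcdef
    have hij₀ : i ≠ j₀ := by
      intro hc
      rw [hc, hj₀] at hij
      simp at hij
    have keyid : c j₀ + (∑ k : Fin N, if j + 1 ≤ (k : ℕ) then Hmat p j₀ k * Γc k else 0)
        = Γc j₀ := by
      rw [hΓcdef, gammaVec_apply]
      congr 1
      refine Finset.sum_congr rfl fun k _ => ?_
      by_cases hk : j + 1 ≤ (k : ℕ)
      · rw [if_pos hk]
      · rw [if_neg hk, Hmat_eq_zero (by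
          intro hlt
          have : (j₀ : ℕ) < (k : ℕ) := hlt
          simp [hj₀] at this
          omega), zero_mul]
    set u : A → ℝ := fun a => G p f (j + 1) (Function.update x j₀ a) with hu
    set v : A → ℝ := fun a => G p f (j + 1) (Function.update x' j₀ a) with hv
    have hdecomp : G p f j x - G p f j x' =
        (∑ a, (p j₀ x a - p j₀ x' a) * u a) + ∑ a, p j₀ x' a * (u a - v a) := by
      rw [G_of_lt f h, G_of_lt f h, ← Finset.sum_sub_distrib, ← Finset.sum_add_distrib]
      exact Finset.sum_congr rfl fun a _ => by simp only [hu, hv]; ring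
    have hosc : ∀ a b, |u a - u b| ≤ Γc j₀ := by
      intro a b
      have := ih (j + 1) (by omega) j₀ (Function.update x j₀ a) (Function.update x j₀ b)
        (by simp [hj₀]) (fun m hm => by
          rw [Function.update_of_ne hm, Function.update_of_ne hm])
      rw [keyid] at this
      exact this
    have hT1 : |∑ a, (p j₀ x a - p j₀ x' a) * u a| ≤ Hmat p i j₀ * Γc j₀ := by
      calc |∑ a, (p j₀ x a - p j₀ x' a) * u a|
          ≤ dTV (p j₀ x) (p j₀ x') * Γc j₀ :=
            abs_sum_mul_le_dTV _ _ (hp.2.1 j₀ x) (hp.2.1 j₀ x') u (Γc j₀) hosc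
        _ ≤ Hmat p i j₀ * Γc j₀ := by
            apply mul_le_mul_of_nonneg_right _ (gammaVec_nonneg hp hf.1 j₀)
            exact dTV_le_Hmat hp (show i < j₀ by
              rw [Fin.lt_def]; simp [hj₀]; omega) x x' hxx'
    have hT2 : |∑ a, p j₀ x' a * (u a - v a)| ≤
        c i + ∑ k : Fin N, if j + 1 ≤ (k : ℕ) then Hmat p i k * Γc k else 0 := by
      set B := c i + ∑ k : Fin N, if j + 1 ≤ (k : ℕ) then Hmat p i k * Γc k else 0 with hB
      calc |∑ a, p j₀ x' a * (u a - v a)| ≤ ∑ a, |p j₀ x' a * (u a - v a)| :=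
            Finset.abs_sum_le_sum_abs _ _
        _ = ∑ a, p j₀ x' a * |u a - v a| := by
            refine Finset.sum_congr rfl fun a _ => ?_
            rw [abs_mul, abs_of_nonneg (hp.1 j₀ x' a)]
        _ ≤ ∑ a, p j₀ x' a * B := by
            refine Finset.sum_le_sum fun a _ => ?_
            apply mul_le_mul_of_nonneg_left _ (hp.1 j₀ x' a)
            exact ih (j + 1) (by omega) i (Function.update x j₀ a) (Function.update x' j₀ a)
              (by omega) (fun m hm => by
                by_cases hmj : m = j₀
                · subst hmj; simp
                · rw [Function.update_of_ne hmj, Function.update_of_ne hmj]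
                  exact hxx' m hm)
        _ = B := by rw [← Finset.sum_mul, hp.2.1 j₀ x', one_mul]
    have hsplit := sum_if_split (fun k => Hmat p i k * Γc k) h
    calc |G p f j x - G p f j x'| ≤ |∑ a, (p j₀ x a - p j₀ x' a) * u a|
          + |∑ a, p j₀ x' a * (u a - v a)| := by rw [hdecomp]; exact abs_add_le _ _
      _ ≤ Hmat p i j₀ * Γc j₀ +
          (c i + ∑ k : Fin N, if j + 1 ≤ (k : ℕ) then Hmat p i k * Γc k else 0) :=
            add_le_add hT1 hT2
      _ = c i + ∑ k : Fin N, if j ≤ (k : ℕ) then Hmat p i k * Γc k else 0 := by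
          rw [hsplit]; ring

/-- Specialization: oscillation of the next-step conditional expectation in the current
coordinate is at most `(Γc)_j`. -/
lemma osc_step (hp : IsCausalKernel p) (hf : HasSensitivity f c) {j : ℕ} (h : j < N)
    (x : Fin N → A) (a b : A) :
    |G p f (j + 1) (Function.update x ⟨j, h⟩ a) - G p f (j + 1) (Function.update x ⟨j, h⟩ b)|
      ≤ (causalResolvent (Hmat p)).mulVec c ⟨j, h⟩ := by
  set j₀ : Fin N := ⟨j, h⟩ with hj₀
  have keyid : c j₀ + (∑ k : Fin N, if j + 1 ≤ (k : ℕ) then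
      Hmat p j₀ k * (causalResolvent (Hmat p)).mulVec c k else 0)
      = (causalResolvent (Hmat p)).mulVec c j₀ := by
    rw [gammaVec_apply]
    congr 1
    refine Finset.sum_congr rfl fun k _ => ?_
    by_cases hk : j + 1 ≤ (k : ℕ)
    · rw [if_pos hk]
    · rw [if_neg hk, Hmat_eq_zero (by
        intro hlt
        have : (j₀ : ℕ) < (k : ℕ) := hlt
        simp [hj₀] at this
        omega), zero_mul]
  have := G_osc hp hf N (j + 1) (by omega) j₀ (Function.update x j₀ a) (Function.update x j₀ b)
    (by simp [hj₀]) (fun m hm => by rw [Function.update_of_ne hm, Function.update_of_ne hm])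
  rw [keyid] at this
  exact this

/-- MGF bound for the conditional expectations, by backward induction. -/
lemma G_mgf (hp : IsCausalKernel p) (hf : HasSensitivity f c) {lam : ℝ} (hlam : 0 ≤ lam) :
    ∀ d j, N ≤ j + d → ∀ x : Fin N → A,
      G p (fun y => Real.exp (lam * f y)) j x ≤
        Real.exp (lam * G p f j x + lam ^ 2 * (∑ k : Fin N,
          if j ≤ (k : ℕ) then ((causalResolvent (Hmat p)).mulVec c k) ^ 2 else 0) / 8) := by
  intro d
  induction d with
  | zero =>
    intro j hj x
    rw [G_of_ge _ (by omega), G_of_ge f (by omega)]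
    apply le_of_eq
    congr 1
    have hz : (∑ k : Fin N, if j ≤ (k : ℕ) then
        ((causalResolvent (Hmat p)).mulVec c k) ^ 2 else 0) = 0 := by
      apply Finset.sum_eq_zero
      intro k _
      rw [if_neg (by omega)]
    rw [hz]
    ring
  | succ d ih =>
    intro j hj x
    by_cases h : j < N
    swap
    · rw [G_of_ge _ h, G_of_ge f h]
      apply le_of_eq
      congr 1
      have hz : (∑ k : Fin N, if j ≤ (k : ℕ) then
          ((causalResolvent (Hmat p)).mulVec c k) ^ 2 else 0) = 0 := by
        apply Finset.sum_eq_zero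
        intro k _
        rw [if_neg (by omega)]
      rw [hz]
      ring
    set j₀ : Fin N := ⟨j, h⟩ with hj₀
    set Γc := (causalResolvent (Hmat p)).mulVec c with hΓcdef
    set g : A → ℝ := fun a => G p f (j + 1) (Function.update x j₀ a) with hg
    set S' := ∑ k : Fin N, if j + 1 ≤ (k : ℕ) then Γc k ^ 2 else 0 with hS'
    have hmean : ∑ a, p j₀ x a * g a = G p f j x := (G_of_lt f h x).symm
    have hD : ∀ a b, |g a - g b| ≤ Γc j₀ := fun a b => osc_step hp hf h x a b
    calc G p (fun y => Real.exp (lam * f y)) j x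
        = ∑ a, p j₀ x a * G p (fun y => Real.exp (lam * f y)) (j + 1)
            (Function.update x j₀ a) := G_of_lt _ h x
      _ ≤ ∑ a, p j₀ x a * Real.exp (lam * g a + lam ^ 2 * S' / 8) := by
          refine Finset.sum_le_sum fun a _ => ?_
          exact mul_le_mul_of_nonneg_left (ih (j + 1) (by omega) _) (hp.1 j₀ x a)
      _ = (∑ a, p j₀ x a * Real.exp (lam * g a)) * Real.exp (lam ^ 2 * S' / 8) := by
          rw [Finset.sum_mul]
          refine Finset.sum_congr rfl fun a _ => ?_
          rw [Real.exp_add]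
          ring
      _ ≤ Real.exp (lam * (∑ a, p j₀ x a * g a) + lam ^ 2 * (Γc j₀) ^ 2 / 8) *
            Real.exp (lam ^ 2 * S' / 8) := by
          apply mul_le_mul_of_nonneg_right _ (Real.exp_pos _).le
          exact hoeffding_discrete (p j₀ x) (hp.1 j₀ x) (hp.2.1 j₀ x) g (Γc j₀) lam hlam hD
      _ = Real.exp (lam * G p f j x + lam ^ 2 * (∑ k : Fin N,
            if j ≤ (k : ℕ) then Γc k ^ 2 else 0) / 8) := by
          rw [← Real.exp_add, hmean]
          congr 1
          rw [sum_if_split (fun k => Γc k ^ 2) h, ← hS']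
          ring

/-- One-sided Chernoff tail bound. -/
lemma tail_bound (hp : IsCausalKernel p) (hf : HasSensitivity f c) {t : ℝ} (ht : 0 < t)
    (hV : 0 < ∑ k : Fin N, ((causalResolvent (Hmat p)).mulVec c k) ^ 2) :
    ∑ x ∈ univ.filter (fun x => t ≤ f x - expVal (jointLaw p) f), jointLaw p x ≤
      Real.exp (-(2 * t ^ 2) / ∑ k : Fin N, ((causalResolvent (Hmat p)).mulVec c k) ^ 2) := by
  set V := ∑ k : Fin N, ((causalResolvent (Hmat p)).mulVec c k) ^ 2 with hVdef
  set lam := 4 * t / V with hlamdef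
  have hlam0 : 0 < lam := by positivity
  set μ := expVal (jointLaw p) f with hμdef
  have hPnn : ∀ x, 0 ≤ jointLaw p x := fun x =>
    Finset.prod_nonneg fun j _ => hp.1 j x (x j)
  set x₀ : Fin N → A := Classical.arbitrary _ with hx₀
  have hG0 : G p f 0 x₀ = μ := by
    rw [G_zero_eq hp f x₀, hμdef, expVal]
  have hGexp : ∑ x, jointLaw p x * Real.exp (lam * f x) =
      G p (fun y => Real.exp (lam * f y)) 0 x₀ := (G_zero_eq hp _ x₀).symm
  have hmgf := G_mgf hp hf hlam0.le N 0 (by omega) x₀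
  have hS0 : (∑ k : Fin N, if 0 ≤ (k : ℕ) then
      ((causalResolvent (Hmat p)).mulVec c k) ^ 2 else 0) = V := by
    refine Finset.sum_congr rfl fun k _ => ?_
    rw [if_pos (by omega)]
  rw [hS0, hG0] at hmgf
  calc ∑ x ∈ univ.filter (fun x => t ≤ f x - μ), jointLaw p x
      ≤ ∑ x ∈ univ.filter (fun x => t ≤ f x - μ),
          jointLaw p x * Real.exp (lam * (f x - μ - t)) := by
        refine Finset.sum_le_sum fun x hx => ?_
        simp only [mem_filter, mem_univ, true_and] at hx
        calc jointLaw p x = jointLaw p x * 1 := (mul_one _).symm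
          _ ≤ jointLaw p x * Real.exp (lam * (f x - μ - t)) := by
              apply mul_le_mul_of_nonneg_left _ (hPnn x)
              apply Real.one_le_exp
              exact mul_nonneg hlam0.le (by linarith)
    _ ≤ ∑ x, jointLaw p x * Real.exp (lam * (f x - μ - t)) := by
        apply Finset.sum_le_sum_of_subset_of_nonneg (Finset.filter_subset _ _)
        intro x _ _
        exact mul_nonneg (hPnn x) (Real.exp_pos _).le
    _ = Real.exp (-(lam * (μ + t))) * ∑ x, jointLaw p x * Real.exp (lam * f x) := by
        rw [Finset.mul_sum]
        refine Finset.sum_congr rfl fun x _ => ?_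
        rw [show lam * (f x - μ - t) = -(lam * (μ + t)) + lam * f x by ring, Real.exp_add]
        ring
    _ ≤ Real.exp (-(lam * (μ + t))) * Real.exp (lam * μ + lam ^ 2 * V / 8) := by
        apply mul_le_mul_of_nonneg_left _ (Real.exp_pos _).le
        rw [hGexp]
        exact hmgf
    _ = Real.exp (lam ^ 2 * V / 8 - lam * t) := by
        rw [← Real.exp_add]
        congr 1
        ring
    _ = Real.exp (-(2 * t ^ 2) / V) := by
        congr 1
        rw [hlamdef]
        field_simp
        ring

end Main

end MDC

open MDC

/-- **Matrix-Decoupled Concentration** (Theorem 3.1):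
`ℙ(|f(X) - 𝔼 f(X)| ≥ t) ≤ 2 exp(-2t² / ‖Γc‖₂²)`. -/
theorem matrix_decoupled_concentration
    {N : ℕ} (hN : 1 ≤ N) {A : Type*} [Fintype A] [Nonempty A] [DecidableEq A]
    (p : Fin N → (Fin N → A) → A → ℝ) (hp : IsCausalKernel p)
    (f : (Fin N → A) → ℝ) (c : Fin N → ℝ) (hf : HasSensitivity f c)
    (t : ℝ) (ht : 0 < t)
    (hΓc : (causalResolvent (Hmat p)).mulVec c ≠ 0) :
    ∑ x ∈ univ.filter (fun x => t ≤ |f x - expVal (jointLaw p) f|), jointLaw p x ≤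
      2 * Real.exp (-(2 * t ^ 2) / ∑ k, ((causalResolvent (Hmat p)).mulVec c k) ^ 2) := by
  classical
  set Γc := (causalResolvent (Hmat p)).mulVec c with hΓcdef
  set V := ∑ k : Fin N, (Γc k) ^ 2 with hVdef
  have hV : 0 < V := by
    obtain ⟨k, hk⟩ := Function.ne_iff.mp hΓc
    refine Finset.sum_pos' (fun k _ => sq_nonneg _) ⟨k, mem_univ k, ?_⟩
    exact lt_of_le_of_ne (sq_nonneg _) (Ne.symm (pow_ne_zero 2 hk))
  set μ := expVal (jointLaw p) f with hμdef
  have hPnn : ∀ x, 0 ≤ jointLaw p x := fun x =>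
    Finset.prod_nonneg fun j _ => hp.1 j x (x j)
  have hfneg : HasSensitivity (fun x => -f x) c := by
    refine ⟨hf.1, fun x y => ?_⟩
    rw [show -f x - -f y = -(f x - f y) by ring, abs_neg]
    exact hf.2 x y
  have hEneg : expVal (jointLaw p) (fun x => -f x) = -μ := by
    rw [hμdef, expVal, expVal, ← Finset.sum_neg_distrib]
    exact Finset.sum_congr rfl fun x _ => by ring
  set S₁ := univ.filter (fun x => t ≤ f x - μ) with hS₁
  set S₂ := univ.filter (fun x : Fin N → A =>
    t ≤ (fun x => -f x) x - expVal (jointLaw p) (fun x => -f x)) with hS₂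
  have hS₂' : S₂ = univ.filter (fun x => t ≤ μ - f x) := by
    rw [hS₂]
    refine Finset.filter_congr fun x _ => ?_
    rw [hEneg]
    show t ≤ -f x - -μ ↔ t ≤ μ - f x
    constructor <;> intro <;> linarith
  have hsub : univ.filter (fun x => t ≤ |f x - μ|) ⊆ S₁ ∪ S₂ := by
    intro x hx
    simp only [mem_filter, mem_univ, true_and] at hx
    rcases le_abs.mp hx with h1 | h1
    · exact Finset.mem_union_left _ (by simp [hS₁, h1])
    · refine Finset.mem_union_right _ ?_
      rw [hS₂']
      simp only [mem_filter, mem_univ, true_and]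
      linarith
  have hdisj : Disjoint S₁ S₂ := by
    rw [Finset.disjoint_left]
    intro x h1 h2
    rw [hS₂'] at h2
    simp only [hS₁, mem_filter, mem_univ, true_and] at h1 h2
    linarith
  have ht1 := tail_bound hp hf ht hV
  have ht2 := tail_bound hp hfneg ht hV
  calc ∑ x ∈ univ.filter (fun x => t ≤ |f x - μ|), jointLaw p x
      ≤ ∑ x ∈ S₁ ∪ S₂, jointLaw p x :=
        Finset.sum_le_sum_of_subset_of_nonneg hsub (fun x _ _ => hPnn x)
    _ = (∑ x ∈ S₁, jointLaw p x) + ∑ x ∈ S₂, jointLaw p x := Finset.sum_union hdisj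
    _ ≤ Real.exp (-(2 * t ^ 2) / V) + Real.exp (-(2 * t ^ 2) / V) := add_le_add ht1 ht2
    _ = 2 * Real.exp (-(2 * t ^ 2) / V) := by ring
end
end

section
/- Define the spectral decay coefficient κ := ‖Γ‖₂^{−2}, where ‖Γ‖₂ is the ℓ²-operator norm of Γ. Then for every t > 0 (assuming c ≠ 0): ℙ(|f(X) − 𝔼[f(X)]| ≥ t) ≤ 2·exp(−2κt² / ‖c‖₂²), where ‖c‖₂² = Σ_{j=1}^N c_j². -/
open Finset Matrix

noncomputable section

/-- The ℓ²-operator norm of a real matrix, i.e. the norm of the induced operator on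
Euclidean space. -/
def l2OpNorm {N : ℕ} (M : Matrix (Fin N) (Fin N) ℝ) : ℝ :=
  ‖LinearMap.toContinuousLinearMap (Matrix.toEuclideanLin M)‖

/-! ### Auxiliary lemmas -/

set_option linter.unusedSectionVars false

set_option maxHeartbeats 1000000

section Aux

lemma core_ineq (q ℓ : ℝ) (hq0 : 0 ≤ q) (hq1 : q ≤ 1) (hℓ : 0 ≤ ℓ) :
    1 - q + q * Real.exp ℓ ≤ Real.exp (q * ℓ + ℓ ^ 2 / 8) := by
  set d : ℝ → ℝ := fun L => 1 - q + q * Real.exp L with hd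
  have hdpos : ∀ L, 0 < d L := by
    intro L
    rcases eq_or_lt_of_le hq0 with h | h
    · simp [hd, ← h]
    · have := Real.exp_pos L
      simp only [hd]
      nlinarith
  set r : ℝ → ℝ := fun L => q * Real.exp L / d L with hr
  have hdd : ∀ L, HasDerivAt d (q * Real.exp L) L := by
    intro L
    exact ((Real.hasDerivAt_exp L).const_mul q).const_add (1 - q)
  have hrd : ∀ L, HasDerivAt r (r L * (1 - r L)) L := by
    intro L
    have h := ((Real.hasDerivAt_exp L).const_mul q).div (hdd L) (hdpos L).ne'
    refine h.congr_deriv ?_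
    have hL := (hdpos L).ne'
    simp only [hr]
    field_simp
  set ψ : ℝ → ℝ := fun L => r L - q - L / 4 with hψ
  have hψd : ∀ L, HasDerivAt ψ (r L * (1 - r L) - 1 / 4) L := by
    intro L
    exact ((hrd L).sub_const q).sub ((hasDerivAt_id L).div_const 4)
  have hψ0 : ψ 0 = 0 := by simp [hψ, hr, hd]
  have hψle : ∀ L, 0 ≤ L → ψ L ≤ 0 := by
    intro L hL
    have hanti : AntitoneOn ψ (Set.Ici (0:ℝ)) := by
      apply antitoneOn_of_deriv_nonpos (convex_Ici 0)
      · exact fun x _ => ((hψd x).differentiableAt).continuousAt.continuousWithinAt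
      · intro x _
        exact (hψd x).differentiableAt.differentiableWithinAt
      · intro x _
        rw [(hψd x).deriv]
        nlinarith [sq_nonneg (2 * r x - 1)]
    have := hanti (Set.self_mem_Ici) (Set.mem_Ici.2 hL) hL
    rwa [hψ0] at this
  set φ : ℝ → ℝ := fun L => Real.log (d L) - q * L - L ^ 2 / 8 with hφ
  have hφd : ∀ L, HasDerivAt φ (ψ L) L := by
    intro L
    have h1 : HasDerivAt (fun L => Real.log (d L)) (q * Real.exp L / d L) L :=
      (hdd L).log (hdpos L).ne'
    have := (h1.sub ((hasDerivAt_id L).const_mul q)).sub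
      (((hasDerivAt_id L).pow 2).div_const 8)
    refine this.congr_deriv ?_
    simp [hψ, hr]
    ring
  have hφ0 : φ 0 = 0 := by simp [hφ, hd]
  have hφle : φ ℓ ≤ 0 := by
    have hanti : AntitoneOn φ (Set.Ici (0:ℝ)) := by
      apply antitoneOn_of_deriv_nonpos (convex_Ici 0)
      · exact fun x _ => ((hφd x).differentiableAt).continuousAt.continuousWithinAt
      · intro x _
        exact (hφd x).differentiableAt.differentiableWithinAt
      · intro x hx
        rw [(hφd x).deriv]
        exact hψle x (le_of_lt (by simpa using hx))
    have := hanti (Set.self_mem_Ici) (Set.mem_Ici.2 hℓ) hℓ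
    rwa [hφ0] at this
  have : Real.log (d ℓ) ≤ q * ℓ + ℓ ^ 2 / 8 := by
    have := hφle
    simp only [hφ] at this
    linarith
  calc 1 - q + q * Real.exp ℓ = d ℓ := rfl
    _ = Real.exp (Real.log (d ℓ)) := (Real.exp_log (hdpos ℓ)).symm
    _ ≤ _ := Real.exp_le_exp.2 this

/-- Discrete Hoeffding lemma: a mean-zero variable with range ≤ L has mgf ≤ exp(L²/8). -/
lemma discrete_hoeffding {A : Type*} [Fintype A] [Nonempty A]
    (w h : A → ℝ) (hw : ∀ a, 0 ≤ w a) (hw1 : ∑ a, w a = 1)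
    (hmean : ∑ a, w a * h a = 0) (L : ℝ) (hL : ∀ a b, |h a - h b| ≤ L) :
    ∑ a, w a * Real.exp (h a) ≤ Real.exp (L ^ 2 / 8) := by
  have hL0 : 0 ≤ L := le_trans (abs_nonneg _) (hL (Classical.arbitrary A) (Classical.arbitrary A))
  set M : ℝ := univ.sup' univ_nonempty h with hM
  set m : ℝ := univ.inf' univ_nonempty h with hm
  have hhM : ∀ a, h a ≤ M := fun a => le_sup' h (mem_univ a)
  have hhm : ∀ a, m ≤ h a := fun a => inf'_le h (mem_univ a)
  have hmM : m ≤ M := le_trans (hhm (Classical.arbitrary A)) (hhM (Classical.arbitrary A))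
  have hMm_L : M - m ≤ L := by
    obtain ⟨a, _, ha⟩ := exists_mem_eq_sup' univ_nonempty h
    obtain ⟨b, _, hb⟩ := exists_mem_eq_inf' univ_nonempty h
    have h2 : M - m = h a - h b := by rw [hM, hm, ha, hb]
    rw [h2]
    exact le_trans (le_abs_self _) (hL a b)
  have hm0 : m ≤ 0 := by
    calc m = ∑ a, w a * m := by rw [← Finset.sum_mul, hw1, one_mul]
      _ ≤ ∑ a, w a * h a := Finset.sum_le_sum fun a _ => mul_le_mul_of_nonneg_left (hhm a) (hw a)
      _ = 0 := hmean
  have hM0 : 0 ≤ M := by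
    calc (0:ℝ) = ∑ a, w a * h a := hmean.symm
      _ ≤ ∑ a, w a * M := Finset.sum_le_sum fun a _ => mul_le_mul_of_nonneg_left (hhM a) (hw a)
      _ = M := by rw [← Finset.sum_mul, hw1, one_mul]
  rcases eq_or_lt_of_le hmM with heq | hlt
  · -- degenerate: h is constant, hence 0
    have hM0' : M = 0 := le_antisymm (heq ▸ hm0) hM0
    have : ∀ a, h a = 0 := by
      intro a
      have h1 := hhM a
      have h2 := hhm a
      rw [heq, hM0'] at h2
      rw [hM0'] at h1
      linarith
    simp only [this, Real.exp_zero, mul_one, hw1]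
    exact Real.one_le_exp (by positivity)
  · -- convexity: exp (h a) ≤ ((M - h a) * exp m + (h a - m) * exp M) / (M - m)
    have hconv : ∀ a, Real.exp (h a) ≤
        ((M - h a) / (M - m)) * Real.exp m + ((h a - m) / (M - m)) * Real.exp M := by
      intro a
      have h1 : (0:ℝ) ≤ (M - h a) / (M - m) := div_nonneg (by linarith [hhM a]) (by linarith)
      have h2 : (0:ℝ) ≤ (h a - m) / (M - m) := div_nonneg (by linarith [hhm a]) (by linarith)
      have h3 : (M - h a) / (M - m) + (h a - m) / (M - m) = 1 := by
        rw [← add_div]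
        have : M - h a + (h a - m) = M - m := by ring
        rw [this, div_self (sub_ne_zero.2 hlt.ne')]
      have := convexOn_exp.2 (Set.mem_univ m) (Set.mem_univ M) h1 h2 h3
      simp only [smul_eq_mul] at this
      have harg : (M - h a) / (M - m) * m + (h a - m) / (M - m) * M = h a := by
        rw [div_mul_eq_mul_div, div_mul_eq_mul_div, ← add_div,
          div_eq_iff (sub_ne_zero.2 hlt.ne')]
        ring
      rw [harg] at this
      exact this
    have hsum : ∑ a, w a * Real.exp (h a) ≤ (M * Real.exp m - m * Real.exp M) / (M - m) := by
      calc ∑ a, w a * Real.exp (h a)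
          ≤ ∑ a, w a * (((M - h a) / (M - m)) * Real.exp m + ((h a - m) / (M - m)) * Real.exp M) :=
            Finset.sum_le_sum fun a _ => mul_le_mul_of_nonneg_left (hconv a) (hw a)
        _ = (M * Real.exp m - m * Real.exp M) / (M - m) := by
            have expand : ∀ a, w a * (((M - h a) / (M - m)) * Real.exp m + ((h a - m) / (M - m)) * Real.exp M)
                = (w a * M - w a * h a) * (Real.exp m / (M - m)) + (w a * h a - w a * m) * (Real.exp M / (M - m)) := by
              intro a; field_simp
            rw [Finset.sum_congr rfl fun a _ => expand a]
            rw [Finset.sum_add_distrib, ← Finset.sum_mul, ← Finset.sum_mul]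
            have e1 : ∑ a, (w a * M - w a * h a) = M := by
              rw [Finset.sum_sub_distrib, hmean, ← Finset.sum_mul, hw1]; ring
            have e2 : ∑ a, (w a * h a - w a * m) = -m := by
              rw [Finset.sum_sub_distrib, hmean, ← Finset.sum_mul, hw1]; ring
            rw [e1, e2]
            field_simp
            ring
    refine le_trans hsum ?_
    -- apply core inequality with q = -m/(M-m), ℓ = M - m
    set ℓ := M - m with hℓdef
    have hℓpos : 0 < ℓ := by simp only [hℓdef]; linarith
    set q := -m / ℓ with hqdef
    have hq0 : 0 ≤ q := div_nonneg (by linarith) hℓpos.le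
    have hq1 : q ≤ 1 := by
      rw [div_le_one hℓpos]
      simp only [hℓdef]; linarith
    have key := core_ineq q ℓ hq0 hq1 hℓpos.le
    have hqℓ : q * ℓ = -m := by rw [hqdef, div_mul_cancel₀ _ hℓpos.ne']
    have lhs_eq : (M * Real.exp m - m * Real.exp M) / (M - m)
        = Real.exp m * (1 - q + q * Real.exp ℓ) := by
      have hEM : Real.exp M = Real.exp m * Real.exp ℓ := by
        rw [← Real.exp_add]; congr 1; rw [hℓdef]; ring
      rw [hEM, hqdef]
      field_simp
      ring
    rw [lhs_eq]
    calc Real.exp m * (1 - q + q * Real.exp ℓ)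
        ≤ Real.exp m * Real.exp (q * ℓ + ℓ ^ 2 / 8) :=
          mul_le_mul_of_nonneg_left key (Real.exp_nonneg m)
      _ = Real.exp (m + (q * ℓ + ℓ ^ 2 / 8)) := by rw [← Real.exp_add]
      _ = Real.exp (ℓ ^ 2 / 8) := by rw [hqℓ]; ring_nf
      _ ≤ Real.exp (L ^ 2 / 8) := by
          apply Real.exp_le_exp.2
          apply div_le_div_of_nonneg_right _ (by norm_num)
          · exact pow_le_pow_left₀ hℓpos.le hMm_L 2

variable {N : ℕ} {A : Type*} [Fintype A] [Nonempty A] [DecidableEq A]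

/-- Key total-variation pairing bound. -/
lemma weighted_pair_bound (μ ν U : A → ℝ)
    (hμ1 : ∑ a, μ a = 1) (hν1 : ∑ a, ν a = 1) (D : ℝ)
    (hU : ∀ a b, |U a - U b| ≤ D) :
    |∑ a, (μ a - ν a) * U a| ≤ dTV μ ν * D := by
  set M : ℝ := univ.sup' univ_nonempty U with hM
  set m : ℝ := univ.inf' univ_nonempty U with hm
  have hhM : ∀ a, U a ≤ M := fun a => le_sup' U (mem_univ a)
  have hhm : ∀ a, m ≤ U a := fun a => inf'_le U (mem_univ a)
  have hMm : M - m ≤ D := by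
    obtain ⟨a, _, ha⟩ := exists_mem_eq_sup' univ_nonempty U
    obtain ⟨b, _, hb⟩ := exists_mem_eq_inf' univ_nonempty U
    have h2 : M - m = U a - U b := by rw [hM, hm, ha, hb]
    rw [h2]
    exact le_trans (le_abs_self _) (hU a b)
  set c₀ : ℝ := (M + m) / 2 with hc₀
  have hkey : ∀ a, |U a - c₀| ≤ D / 2 := by
    intro a
    rw [abs_le]
    constructor
    · have := hhm a; simp only [hc₀]; linarith
    · have := hhM a; simp only [hc₀]; linarith
  have h0 : ∑ a, (μ a - ν a) = 0 := by
    rw [Finset.sum_sub_distrib, hμ1, hν1]; ring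
  have hshift : ∑ a, (μ a - ν a) * U a = ∑ a, (μ a - ν a) * (U a - c₀) := by
    have : ∑ a, (μ a - ν a) * (U a - c₀)
        = ∑ a, (μ a - ν a) * U a - (∑ a, (μ a - ν a)) * c₀ := by
      rw [Finset.sum_mul, ← Finset.sum_sub_distrib]
      apply Finset.sum_congr rfl
      intro a _
      ring
    rw [this, h0]
    ring
  rw [hshift]
  calc |∑ a, (μ a - ν a) * (U a - c₀)| ≤ ∑ a, |(μ a - ν a) * (U a - c₀)| :=
        Finset.abs_sum_le_sum_abs _ _
    _ ≤ ∑ a, |μ a - ν a| * (D / 2) := by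
        apply Finset.sum_le_sum
        intro a _
        rw [abs_mul]
        exact mul_le_mul_of_nonneg_left (hkey a) (abs_nonneg _)
    _ = dTV μ ν * D := by
        rw [← Finset.sum_mul, dTV]
        ring

lemma dTV_nonneg (μ ν : A → ℝ) : 0 ≤ dTV μ ν := by
  unfold dTV
  positivity

lemma Hmat_nonneg (p : Fin N → (Fin N → A) → A → ℝ) (i j : Fin N) : 0 ≤ Hmat p i j := by
  unfold Hmat
  split
  · exact Real.iSup_nonneg fun q => dTV_nonneg _ _
  · exact le_refl 0

lemma dTV_le_Hmat (p : Fin N → (Fin N → A) → A → ℝ) {i j : Fin N} (hij : i < j)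
    {u v : Fin N → A} (huv : ∀ m, m < j → m ≠ i → u m = v m) :
    dTV (p j u) (p j v) ≤ Hmat p i j := by
  unfold Hmat
  rw [if_pos hij]
  exact le_ciSup (f := fun q : {q : (Fin N → A) × (Fin N → A) //
      ∀ m, m < j → m ≠ i → q.1 m = q.2 m} => dTV (p j q.1.1) (p j q.1.2))
    (Set.Finite.bddAbove (Set.finite_range _)) ⟨(u, v), huv⟩

lemma Hmat_eq_zero (p : Fin N → (Fin N → A) → A → ℝ) {i j : Fin N} (h : ¬ i < j) :
    Hmat p i j = 0 := by
  unfold Hmat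
  rw [if_neg h]

lemma resolvent_fixed (p : Fin N → (Fin N → A) → A → ℝ) (c : Fin N → ℝ) :
    causalResolvent (Hmat p) *ᵥ c = c + Hmat p *ᵥ (causalResolvent (Hmat p) *ᵥ c) := by
  set H := Hmat p with hH
  have hBT : (1 - H).BlockTriangular id := by
    intro i j hij
    have hij' : j < i := hij
    have h1 : (1 : Matrix (Fin N) (Fin N) ℝ) i j = 0 := Matrix.one_apply_ne (ne_of_gt hij')
    have h2 : H i j = 0 := Hmat_eq_zero p (not_lt_of_gt hij')
    simp [Matrix.sub_apply, h1, h2]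
  have hdet : (1 - H).det = 1 := by
    rw [Matrix.det_of_upperTriangular hBT]
    apply Finset.prod_eq_one
    intro i _
    have h2 : H i i = 0 := Hmat_eq_zero p (lt_irrefl i)
    simp [Matrix.sub_apply, Matrix.one_apply_eq, h2]
  have hmul : (1 - H) * causalResolvent H = 1 :=
    Matrix.mul_nonsing_inv _ (by rw [hdet]; exact isUnit_one)
  have hΓ : causalResolvent H = 1 + H * causalResolvent H := by
    have := hmul
    rw [Matrix.sub_mul, Matrix.one_mul, sub_eq_iff_eq_add] at this
    exact this
  calc causalResolvent H *ᵥ c = (1 + H * causalResolvent H) *ᵥ c := by rw [← hΓ]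
    _ = c + H *ᵥ (causalResolvent H *ᵥ c) := by
        rw [Matrix.add_mulVec, Matrix.one_mulVec, ← Matrix.mulVec_mulVec]

lemma mulVec_sq_le (M : Matrix (Fin N) (Fin N) ℝ) (c : Fin N → ℝ) :
    ∑ j, (M *ᵥ c) j ^ 2 ≤ l2OpNorm M ^ 2 * ∑ j, c j ^ 2 := by
  set T := LinearMap.toContinuousLinearMap (Matrix.toEuclideanLin M) with hT
  set v : EuclideanSpace ℝ (Fin N) := (WithLp.equiv 2 (Fin N → ℝ)).symm c with hv
  have hle : ‖T v‖ ≤ ‖T‖ * ‖v‖ := T.le_opNorm v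
  have hTv : T v = (WithLp.equiv 2 (Fin N → ℝ)).symm (M *ᵥ c) := by
    rw [hT, LinearMap.coe_toContinuousLinearMap', hv,
      ]
    rfl
  have hnTv : ‖T v‖ ^ 2 = ∑ j, (M *ᵥ c) j ^ 2 := by
    rw [hTv, EuclideanSpace.norm_eq, Real.sq_sqrt (by positivity)]
    apply Finset.sum_congr rfl
    intro j _
    rw [Real.norm_eq_abs, sq_abs]
    rfl
  have hnv : ‖v‖ ^ 2 = ∑ j, c j ^ 2 := by
    rw [hv, EuclideanSpace.norm_eq, Real.sq_sqrt (by positivity)]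
    apply Finset.sum_congr rfl
    intro j _
    rw [Real.norm_eq_abs, sq_abs]
    rfl
  calc ∑ j, (M *ᵥ c) j ^ 2 = ‖T v‖ ^ 2 := hnTv.symm
    _ ≤ (‖T‖ * ‖v‖) ^ 2 := pow_le_pow_left₀ (norm_nonneg _) hle 2
    _ = l2OpNorm M ^ 2 * ∑ j, c j ^ 2 := by
        rw [mul_pow, hnv, l2OpNorm, hT]

/-! ### Conditional expectations -/

/-- Conditional expectation given the first `k` coordinates. -/
def CE (p : Fin N → (Fin N → A) → A → ℝ) (k : ℕ) (g : (Fin N → A) → ℝ)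
    (x : Fin N → A) : ℝ :=
  ∑ y ∈ univ.filter (fun y => ∀ i : Fin N, (i : ℕ) < k → y i = x i),
    (∏ j ∈ univ.filter (fun j : Fin N => k ≤ (j : ℕ)), p j y (y j)) * g y

lemma filter_ge_top : univ.filter (fun j : Fin N => N ≤ (j : ℕ)) = (∅ : Finset (Fin N)) := by
  ext j
  simp only [mem_filter, mem_univ, true_and, notMem_empty, iff_false]
  exact Nat.not_le.2 j.isLt

lemma filter_ge_insert {k : ℕ} (hkN : k < N) :
    univ.filter (fun j : Fin N => k ≤ (j : ℕ))
      = insert (⟨k, hkN⟩ : Fin N) (univ.filter (fun j : Fin N => k + 1 ≤ (j : ℕ))) := by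
  ext j
  simp only [mem_filter, mem_univ, true_and, mem_insert, Fin.ext_iff]
  omega

lemma not_mem_filter_ge {k : ℕ} (hkN : k < N) :
    (⟨k, hkN⟩ : Fin N) ∉ univ.filter (fun j : Fin N => k + 1 ≤ (j : ℕ)) := by
  simp

lemma CE_top (p : Fin N → (Fin N → A) → A → ℝ) (g : (Fin N → A) → ℝ) (x : Fin N → A) :
    CE p N g x = g x := by
  unfold CE
  have h1 : univ.filter (fun y : Fin N → A => ∀ i : Fin N, (i : ℕ) < N → y i = x i) = {x} := by
    ext y
    simp only [mem_filter, mem_univ, true_and, mem_singleton]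
    constructor
    · intro h
      funext i
      exact h i i.isLt
    · intro h i _
      rw [h]
  rw [h1, filter_ge_top]
  simp

lemma CE_congr (p : Fin N → (Fin N → A) → A → ℝ) (k : ℕ) {g g' : (Fin N → A) → ℝ}
    (x : Fin N → A)
    (h : ∀ y, (∀ i : Fin N, (i : ℕ) < k → y i = x i) → g y = g' y) :
    CE p k g x = CE p k g' x := by
  unfold CE
  apply Finset.sum_congr rfl
  intro y hy
  rw [h y (by simpa using hy)]

lemma CE_prefix (p : Fin N → (Fin N → A) → A → ℝ) (k : ℕ) (g : (Fin N → A) → ℝ)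
    {x x' : Fin N → A} (h : ∀ i : Fin N, (i : ℕ) < k → x i = x' i) :
    CE p k g x = CE p k g x' := by
  unfold CE
  apply Finset.sum_congr _ (fun _ _ => rfl)
  ext y
  simp only [mem_filter, mem_univ, true_and]
  constructor
  · intro hy i hi
    rw [hy i hi, h i hi]
  · intro hy i hi
    rw [hy i hi, h i hi]

lemma CE_rec (p : Fin N → (Fin N → A) → A → ℝ) (hp : IsCausalKernel p)
    {k : ℕ} (hkN : k < N) (g : (Fin N → A) → ℝ) (x : Fin N → A) :
    CE p k g x = ∑ a, p ⟨k, hkN⟩ x a * CE p (k + 1) g (Function.update x ⟨k, hkN⟩ a) := by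
  set K : Fin N := ⟨k, hkN⟩ with hK
  have hfiber :
      ∀ a : A, (univ.filter (fun y : Fin N → A => ∀ i : Fin N, (i : ℕ) < k → y i = x i)).filter
          (fun y => y K = a)
        = univ.filter (fun y : Fin N → A => ∀ i : Fin N, (i : ℕ) < k + 1 →
            y i = Function.update x K a i) := by
    intro a
    ext y
    simp only [mem_filter, mem_univ, true_and]
    constructor
    · rintro ⟨h1, h2⟩ i hi
      rcases Nat.lt_or_ge (i : ℕ) k with h | h
      · rw [Function.update_of_ne (Fin.ne_of_val_ne (show (i : ℕ) ≠ k by omega))]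
        exact h1 i h
      · have hik : i = K := Fin.ext (show (i : ℕ) = k by omega)
        rw [hik, Function.update_self]
        exact h2
    · intro h
      refine ⟨fun i hi => ?_, ?_⟩
      · have := h i (by omega)
        rwa [Function.update_of_ne (Fin.ne_of_val_ne (show (i : ℕ) ≠ k by omega))] at this
      · have := h K (by simp [hK])
        rwa [Function.update_self] at this
  rw [CE, ← Finset.sum_fiberwise_of_maps_to (g := fun y => y K)
    (t := (univ : Finset A)) (fun y _ => mem_univ _)]
  apply Finset.sum_congr rfl
  intro a _
  rw [hfiber a, CE, Finset.mul_sum]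
  apply Finset.sum_congr rfl
  intro y hy
  simp only [mem_filter, mem_univ, true_and] at hy
  have hyK : y K = a := by
    have := hy K (by simp [hK])
    rwa [Function.update_self] at this
  have hpK : p K y = p K x := by
    apply hp.2.2
    intro i hi
    have hik : (i : ℕ) < k := hi
    have := hy i (by omega)
    rw [Function.update_of_ne (Fin.ne_of_val_ne (show (i : ℕ) ≠ k by omega))] at this
    exact this
  rw [filter_ge_insert hkN, Finset.prod_insert (not_mem_filter_ge hkN), hpK, hyK]
  ring

lemma CE_zero (p : Fin N → (Fin N → A) → A → ℝ) (g : (Fin N → A) → ℝ) (x : Fin N → A) :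
    CE p 0 g x = ∑ y, jointLaw p y * g y := by
  unfold CE jointLaw
  have h1 : univ.filter (fun y : Fin N → A => ∀ i : Fin N, (i : ℕ) < 0 → y i = x i) = univ := by
    simp
  have h2 : univ.filter (fun j : Fin N => 0 ≤ (j : ℕ)) = univ := by simp
  rw [h1, h2]

lemma CE_const (p : Fin N → (Fin N → A) → A → ℝ) (hp : IsCausalKernel p) :
    ∀ d k, k + d = N → ∀ (r : ℝ) (x : Fin N → A), CE p k (fun _ => r) x = r := by
  intro d
  induction d with
  | zero =>
    intro k hk r x
    rw [Nat.add_zero] at hk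
    subst hk
    rw [CE_top]
  | succ d ih =>
    intro k hk r x
    have hkN : k < N := by omega
    rw [CE_rec p hp hkN]
    have : ∀ a, p ⟨k, hkN⟩ x a * CE p (k + 1) (fun _ => r) (Function.update x ⟨k, hkN⟩ a)
        = p ⟨k, hkN⟩ x a * r := by
      intro a
      rw [ih (k + 1) (by omega) r]
    rw [Finset.sum_congr rfl fun a _ => this a, ← Finset.sum_mul, hp.2.1, one_mul]

lemma CE_smul (p : Fin N → (Fin N → A) → A → ℝ) (k : ℕ) (r : ℝ)
    (g : (Fin N → A) → ℝ) (x : Fin N → A) :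
    CE p k (fun y => r * g y) x = r * CE p k g x := by
  unfold CE
  rw [Finset.mul_sum]
  apply Finset.sum_congr rfl
  intro y _
  ring

/-! ### Oscillation bound -/

lemma trunc_sum_eq (p : Fin N → (Fin N → A) → A → ℝ) (c γ : Fin N → ℝ)
    (hγ : ∀ j, c j + ∑ l, Hmat p j l * γ l = γ j) {k : ℕ} (hkN : k < N) :
    c ⟨k, hkN⟩ + ∑ j ∈ univ.filter (fun j : Fin N => k + 1 ≤ (j : ℕ)),
      Hmat p ⟨k, hkN⟩ j * γ j = γ ⟨k, hkN⟩ := by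
  rw [← hγ ⟨k, hkN⟩]
  congr 1
  rw [← Finset.sum_filter_add_sum_filter_not univ (fun j : Fin N => k + 1 ≤ (j : ℕ))
    (fun j => Hmat p ⟨k, hkN⟩ j * γ j)]
  have hz : ∑ j ∈ univ.filter (fun j : Fin N => ¬ k + 1 ≤ (j : ℕ)),
      Hmat p ⟨k, hkN⟩ j * γ j = 0 := by
    apply Finset.sum_eq_zero
    intro j hj
    simp only [mem_filter, mem_univ, true_and] at hj
    rw [Hmat_eq_zero p, zero_mul]
    rw [Fin.lt_def]
    simp only [Fin.val_mk]
    omega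
  rw [hz, add_zero]

lemma osc_bound (p : Fin N → (Fin N → A) → A → ℝ) (hp : IsCausalKernel p)
    (f : (Fin N → A) → ℝ) (c : Fin N → ℝ) (hf : HasSensitivity f c)
    (γ : Fin N → ℝ) (hγ : ∀ j, c j + ∑ l, Hmat p j l * γ l = γ j) :
    ∀ d k, k + d = N → ∀ (i : Fin N), (i : ℕ) < k → ∀ x a a',
      |CE p k f (Function.update x i a) - CE p k f (Function.update x i a')|
        ≤ c i + ∑ j ∈ univ.filter (fun j : Fin N => k ≤ (j : ℕ)), Hmat p i j * γ j := by
  intro d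
  induction d with
  | zero =>
    intro k hk i hik x a a'
    rw [Nat.add_zero] at hk
    subst hk
    rw [CE_top, CE_top, filter_ge_top, Finset.sum_empty, add_zero]
    refine le_trans (hf.2 _ _) ?_
    have hterm : ∀ j, (if Function.update x i a j ≠ Function.update x i a' j
        then c j else 0) ≤ (if j = i then c i else 0) := by
      intro j
      by_cases hj : j = i
      · subst hj
        split
        · simp
        · simp [hf.1 j]
      · have : Function.update x i a j = Function.update x i a' j := by
          rw [Function.update_of_ne hj, Function.update_of_ne hj]
        simp [this, hj]
    refine le_trans (Finset.sum_le_sum fun j _ => hterm j) ?_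
    rw [Finset.sum_ite_eq' univ i (fun _ => c i)]
    simp
  | succ d ih =>
    intro k hk i hik x a a'
    have hkN : k < N := by omega
    set K : Fin N := ⟨k, hkN⟩ with hK
    have hiK : i ≠ K := Fin.ne_of_val_ne (show (i : ℕ) ≠ k by omega)
    have hiltK : i < K := by
      rw [Fin.lt_def]
      exact hik
    rw [CE_rec p hp hkN f (Function.update x i a), CE_rec p hp hkN f (Function.update x i a')]
    set u := Function.update x i a with hu
    set v := Function.update x i a' with hv
    set U : A → ℝ := fun b => CE p (k + 1) f (Function.update u K b) with hU
    set V : A → ℝ := fun b => CE p (k + 1) f (Function.update v K b) with hV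
    set RI : ℝ := c i + ∑ j ∈ univ.filter (fun j : Fin N => k + 1 ≤ (j : ℕ)),
      Hmat p i j * γ j with hRI
    set RK : ℝ := c K + ∑ j ∈ univ.filter (fun j : Fin N => k + 1 ≤ (j : ℕ)),
      Hmat p K j * γ j with hRK
    have hUV : ∀ b, |U b - V b| ≤ RI := by
      intro b
      have hcu : Function.update u K b = Function.update (Function.update x K b) i a :=
        Function.update_comm hiK a b x
      have hcv : Function.update v K b = Function.update (Function.update x K b) i a' :=
        Function.update_comm hiK a' b x
      simp only [hU, hV]
      rw [hcu, hcv]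
      exact ih (k + 1) (by omega) i (by omega) (Function.update x K b) a a'
    have hUb : ∀ b b', |U b - U b'| ≤ RK := by
      intro b b'
      exact ih (k + 1) (by omega) K (Nat.lt_succ_self k) u b b'
    have hRK0 : 0 ≤ RK := by
      have := hUb (Classical.arbitrary A) (Classical.arbitrary A)
      exact le_trans (abs_nonneg _) this
    have hRKγ : RK = γ K := trunc_sum_eq p c γ hγ hkN
    have hdecomp : (∑ b, p K u b * U b) - (∑ b, p K v b * V b)
        = (∑ b, p K v b * (U b - V b)) + (∑ b, (p K u b - p K v b) * U b) := by
      rw [← Finset.sum_add_distrib, ← Finset.sum_sub_distrib]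
      apply Finset.sum_congr rfl
      intro b _
      ring
    rw [hdecomp]
    have hT1 : |∑ b, p K v b * (U b - V b)| ≤ RI := by
      calc |∑ b, p K v b * (U b - V b)| ≤ ∑ b, |p K v b * (U b - V b)| :=
            Finset.abs_sum_le_sum_abs _ _
        _ ≤ ∑ b, p K v b * RI := by
            apply Finset.sum_le_sum
            intro b _
            rw [abs_mul, abs_of_nonneg (hp.1 K v b)]
            exact mul_le_mul_of_nonneg_left (hUV b) (hp.1 K v b)
        _ = RI := by rw [← Finset.sum_mul, hp.2.1, one_mul]
    have hT2 : |∑ b, (p K u b - p K v b) * U b| ≤ Hmat p i K * RK := by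
      have hdtv : dTV (p K u) (p K v) ≤ Hmat p i K := by
        apply dTV_le_Hmat p hiltK
        intro m _ hmi
        rw [hu, hv, Function.update_of_ne hmi, Function.update_of_ne hmi]
      calc |∑ b, (p K u b - p K v b) * U b| ≤ dTV (p K u) (p K v) * RK :=
            weighted_pair_bound (p K u) (p K v) U (hp.2.1 K u) (hp.2.1 K v) RK hUb
        _ ≤ Hmat p i K * RK := mul_le_mul_of_nonneg_right hdtv hRK0
    calc |(∑ b, p K v b * (U b - V b)) + (∑ b, (p K u b - p K v b) * U b)|
        ≤ |∑ b, p K v b * (U b - V b)| + |∑ b, (p K u b - p K v b) * U b| := abs_add_le _ _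
      _ ≤ RI + Hmat p i K * RK := add_le_add hT1 hT2
      _ = c i + ∑ j ∈ univ.filter (fun j : Fin N => k ≤ (j : ℕ)), Hmat p i j * γ j := by
          rw [filter_ge_insert hkN, Finset.sum_insert (not_mem_filter_ge hkN), hRI, hRKγ]
          ring

/-! ### MGF bound -/

lemma mgf_bound (p : Fin N → (Fin N → A) → A → ℝ) (hp : IsCausalKernel p)
    (f : (Fin N → A) → ℝ) (β : Fin N → ℝ) (l : ℝ)
    (hosc : ∀ (k : ℕ) (hk : k < N) (x : Fin N → A) (b b' : A),
      |CE p (k + 1) f (Function.update x ⟨k, hk⟩ b)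
        - CE p (k + 1) f (Function.update x ⟨k, hk⟩ b')| ≤ β ⟨k, hk⟩) :
    ∀ d k, k + d = N → ∀ x,
      CE p k (fun y => Real.exp (l * (f y - CE p k f y))) x
        ≤ Real.exp (l ^ 2 / 8 * ∑ j ∈ univ.filter (fun j : Fin N => k ≤ (j : ℕ)), β j ^ 2) := by
  intro d
  induction d with
  | zero =>
    intro k hk x
    rw [Nat.add_zero] at hk
    subst hk
    rw [CE_top, filter_ge_top, Finset.sum_empty]
    rw [CE_top, sub_self, mul_zero, Real.exp_zero, mul_zero, Real.exp_zero]
  | succ d ih =>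
    intro k hk x
    have hkN : k < N := by omega
    set K : Fin N := ⟨k, hkN⟩ with hK
    rw [CE_rec p hp hkN _ x]
    set F0 : ℝ := CE p k f x with hF0
    set G : A → ℝ := fun b => CE p (k + 1) f (Function.update x K b) with hG
    set E1 : ℝ := Real.exp (l ^ 2 / 8 *
      ∑ j ∈ univ.filter (fun j : Fin N => k + 1 ≤ (j : ℕ)), β j ^ 2) with hE1
    have hinner : ∀ b, CE p (k + 1) (fun y => Real.exp (l * (f y - CE p k f y)))
        (Function.update x K b) ≤ Real.exp (l * (G b - F0)) * E1 := by
      intro b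
      have hcong : CE p (k + 1) (fun y => Real.exp (l * (f y - CE p k f y)))
          (Function.update x K b)
          = CE p (k + 1) (fun y => Real.exp (l * (G b - F0))
              * Real.exp (l * (f y - CE p (k + 1) f y))) (Function.update x K b) := by
        apply CE_congr
        intro y hy
        have h1 : CE p k f y = F0 := by
          rw [hF0]
          apply CE_prefix
          intro i hi
          have := hy i (by omega)
          rwa [Function.update_of_ne (Fin.ne_of_val_ne (show (i : ℕ) ≠ k by omega))] at this
        have h2 : CE p (k + 1) f y = G b := by
          rw [hG]
          exact CE_prefix p (k + 1) f hy
        rw [h1, h2, ← Real.exp_add]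
        congr 1
        ring
      rw [hcong, CE_smul]
      exact mul_le_mul_of_nonneg_left (ih (k + 1) (by omega) _) (Real.exp_nonneg _)
    have hmean : ∑ b, p K x b * (l * (G b - F0)) = 0 := by
      have hF0' : ∑ b, p K x b * G b = F0 := (CE_rec p hp hkN f x).symm
      have hexp : ∀ b, p K x b * (l * (G b - F0))
          = l * (p K x b * G b) - l * F0 * p K x b := by
        intro b
        ring
      rw [Finset.sum_congr rfl fun b _ => hexp b, Finset.sum_sub_distrib,
        ← Finset.mul_sum, ← Finset.mul_sum, hF0', hp.2.1]
      ring
    have hLb : ∀ b b', |l * (G b - F0) - l * (G b' - F0)| ≤ |l| * β K := by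
      intro b b'
      have : l * (G b - F0) - l * (G b' - F0) = l * (G b - G b') := by ring
      rw [this, abs_mul]
      exact mul_le_mul_of_nonneg_left (hosc k hkN x b b') (abs_nonneg l)
    have hhoef := discrete_hoeffding (p K x) (fun b => l * (G b - F0)) (hp.1 K x)
      (hp.2.1 K x) hmean (|l| * β K) hLb
    calc ∑ b, p K x b * CE p (k + 1) (fun y => Real.exp (l * (f y - CE p k f y)))
          (Function.update x K b)
        ≤ ∑ b, p K x b * (Real.exp (l * (G b - F0)) * E1) := by
          apply Finset.sum_le_sum
          intro b _
          exact mul_le_mul_of_nonneg_left (hinner b) (hp.1 K x b)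
      _ = (∑ b, p K x b * Real.exp (l * (G b - F0))) * E1 := by
          rw [Finset.sum_mul]
          apply Finset.sum_congr rfl
          intro b _
          ring
      _ ≤ Real.exp ((|l| * β K) ^ 2 / 8) * E1 :=
          mul_le_mul_of_nonneg_right hhoef (Real.exp_nonneg _)
      _ = Real.exp (l ^ 2 / 8 * ∑ j ∈ univ.filter (fun j : Fin N => k ≤ (j : ℕ)), β j ^ 2) := by
          rw [hE1, ← Real.exp_add]
          congr 1
          rw [filter_ge_insert hkN, Finset.sum_insert (not_mem_filter_ge hkN), mul_pow, sq_abs]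
          ring

end Aux

/-- **Spectral decay coefficient bound** (Corollary 3.2): with `κ := ‖Γ‖₂⁻²`,
`ℙ(|f(X) - 𝔼 f(X)| ≥ t) ≤ 2 exp(-2κt² / ‖c‖₂²)`. -/
theorem spectral_decay_concentration
    {N : ℕ} (hN : 1 ≤ N) {A : Type*} [Fintype A] [Nonempty A] [DecidableEq A]
    (p : Fin N → (Fin N → A) → A → ℝ) (hp : IsCausalKernel p)
    (f : (Fin N → A) → ℝ) (c : Fin N → ℝ) (hf : HasSensitivity f c)
    (hc : c ≠ 0) (t : ℝ) (ht : 0 < t) :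
    ∑ x ∈ univ.filter (fun x => t ≤ |f x - expVal (jointLaw p) f|), jointLaw p x ≤
      2 * Real.exp (-(2 * ((l2OpNorm (causalResolvent (Hmat p))) ^ 2)⁻¹ * t ^ 2) /
        ∑ j, (c j) ^ 2) := by
  classical
  set P := jointLaw p with hP
  have hP0 : ∀ x, 0 ≤ P x := fun x => Finset.prod_nonneg fun j _ => hp.1 j x (x j)
  set μ := expVal P f with hμ
  set γ : Fin N → ℝ := causalResolvent (Hmat p) *ᵥ c with hγdef
  have hγ : ∀ j, c j + ∑ l, Hmat p j l * γ l = γ j := by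
    intro j
    have h := congrFun (resolvent_fixed p c) j
    rw [← hγdef] at h
    simp only [Pi.add_apply, Matrix.mulVec, dotProduct] at h
    exact h.symm
  set β : Fin N → ℝ := fun j => |γ j| with hβ
  set V := ∑ j, β j ^ 2 with hV
  set op := l2OpNorm (causalResolvent (Hmat p)) with hop
  set W := op ^ 2 * ∑ j, c j ^ 2 with hW
  have hVW : V ≤ W := by
    rw [hV, hW]
    have hsq : ∀ j, β j ^ 2 = (γ j) ^ 2 := fun j => sq_abs _
    rw [Finset.sum_congr rfl fun j _ => hsq j, hγdef, hop]
    exact mulVec_sq_le _ c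
  have hW0 : 0 ≤ W := by
    rw [hW]
    positivity
  have hosc : ∀ (k : ℕ) (hk : k < N) (x : Fin N → A) (b b' : A),
      |CE p (k + 1) f (Function.update x ⟨k, hk⟩ b)
        - CE p (k + 1) f (Function.update x ⟨k, hk⟩ b')| ≤ β ⟨k, hk⟩ := by
    intro k hk x b b'
    have h := osc_bound p hp f c hf γ hγ (N - (k + 1)) (k + 1) (by omega) ⟨k, hk⟩
      (Nat.lt_succ_self k) x b b'
    refine le_trans h ?_
    rw [trunc_sum_eq p c γ hγ hk]
    exact le_abs_self _
  have hmgf : ∀ l : ℝ, ∑ y, P y * Real.exp (l * (f y - μ)) ≤ Real.exp (l ^ 2 / 8 * V) := by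
    intro l
    have h := mgf_bound p hp f β l hosc N 0 (by omega) (Classical.arbitrary _)
    rw [CE_zero] at h
    have hfu : univ.filter (fun j : Fin N => 0 ≤ (j : ℕ)) = univ := by simp
    rw [hfu] at h
    refine le_trans (le_of_eq ?_) h
    apply Finset.sum_congr rfl
    intro y _
    have hy : CE p 0 f y = μ := by rw [CE_zero]; rfl
    rw [hy]
  have chern : ∀ (l s : ℝ) (S : Finset (Fin N → A)),
      (∀ x ∈ S, 0 ≤ l * (f x - μ) - l * s) →
      ∑ x ∈ S, P x ≤ Real.exp (l ^ 2 / 8 * V - l * s) := by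
    intro l s S hS
    calc ∑ x ∈ S, P x ≤ ∑ x ∈ S, P x * Real.exp (l * (f x - μ) - l * s) := by
          apply Finset.sum_le_sum
          intro x hx
          nth_rewrite 1 [← mul_one (P x)]
          exact mul_le_mul_of_nonneg_left (Real.one_le_exp (hS x hx)) (hP0 x)
      _ ≤ ∑ x, P x * Real.exp (l * (f x - μ) - l * s) := by
          apply Finset.sum_le_sum_of_subset_of_nonneg (Finset.subset_univ S)
          intro x _ _
          exact mul_nonneg (hP0 x) (Real.exp_nonneg _)
      _ = Real.exp (-(l * s)) * ∑ x, P x * Real.exp (l * (f x - μ)) := by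
          rw [Finset.mul_sum]
          apply Finset.sum_congr rfl
          intro x _
          rw [show l * (f x - μ) - l * s = -(l * s) + l * (f x - μ) by ring, Real.exp_add]
          ring
      _ ≤ Real.exp (-(l * s)) * Real.exp (l ^ 2 / 8 * V) :=
          mul_le_mul_of_nonneg_left (hmgf l) (Real.exp_nonneg _)
      _ = Real.exp (l ^ 2 / 8 * V - l * s) := by
          rw [← Real.exp_add]
          congr 1
          ring
  set l := 4 * t / W with hl
  have hl0 : 0 ≤ l := by
    rw [hl]
    positivity
  have harith : l ^ 2 / 8 * V - l * t ≤ -(2 * t ^ 2 / W) := by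
    rcases eq_or_lt_of_le hW0 with h | h
    · rw [hl, ← h]
      simp
    · have hVW' : l ^ 2 / 8 * V ≤ l ^ 2 / 8 * W := mul_le_mul_of_nonneg_left hVW (by positivity)
      have heq : l ^ 2 / 8 * W - l * t = -(2 * t ^ 2 / W) := by
        rw [hl]
        field_simp
        ring
      linarith
  have hup : ∑ x ∈ univ.filter (fun x => t ≤ f x - μ), P x ≤ Real.exp (-(2 * t ^ 2 / W)) := by
    refine le_trans (chern l t _ ?_) (Real.exp_le_exp.2 harith)
    intro x hx
    simp only [mem_filter, mem_univ, true_and] at hx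
    nlinarith
  have hlow : ∑ x ∈ univ.filter (fun x => f x - μ ≤ -t), P x
      ≤ Real.exp (-(2 * t ^ 2 / W)) := by
    have harith' : (-l) ^ 2 / 8 * V - (-l) * (-t) ≤ -(2 * t ^ 2 / W) := by
      have heq : (-l) ^ 2 / 8 * V - (-l) * (-t) = l ^ 2 / 8 * V - l * t := by ring
      rw [heq]
      exact harith
    refine le_trans (chern (-l) (-t) _ ?_) (Real.exp_le_exp.2 harith')
    intro x hx
    simp only [mem_filter, mem_univ, true_and] at hx
    nlinarith
  have hsplit : ∑ x ∈ univ.filter (fun x => t ≤ |f x - μ|), P x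
      ≤ ∑ x ∈ univ.filter (fun x => t ≤ f x - μ), P x
        + ∑ x ∈ univ.filter (fun x => f x - μ ≤ -t), P x := by
    have hsub : univ.filter (fun x => t ≤ |f x - μ|)
        ⊆ univ.filter (fun x => t ≤ f x - μ) ∪ univ.filter (fun x => f x - μ ≤ -t) := by
      intro x hx
      simp only [mem_filter, mem_union, mem_univ, true_and] at hx ⊢
      rcases le_abs.1 hx with h | h
      · left; exact h
      · right; linarith
    have hdisj : Disjoint (univ.filter (fun x => t ≤ f x - μ))
        (univ.filter (fun x => f x - μ ≤ -t)) := by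
      rw [Finset.disjoint_left]
      intro x h1 h2
      simp only [mem_filter, mem_univ, true_and] at h1 h2
      linarith
    calc ∑ x ∈ univ.filter (fun x => t ≤ |f x - μ|), P x
        ≤ ∑ x ∈ (univ.filter (fun x => t ≤ f x - μ)
            ∪ univ.filter (fun x => f x - μ ≤ -t)), P x :=
          Finset.sum_le_sum_of_subset_of_nonneg hsub (fun x _ _ => hP0 x)
      _ = _ := Finset.sum_union hdisj
  have hfinal : -(2 * t ^ 2 / W) = -(2 * (op ^ 2)⁻¹ * t ^ 2) / ∑ j, (c j) ^ 2 := by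
    rw [hW, div_eq_mul_inv, div_eq_mul_inv, mul_inv]
    ring
  calc ∑ x ∈ univ.filter (fun x => t ≤ |f x - μ|), P x
      ≤ ∑ x ∈ univ.filter (fun x => t ≤ f x - μ), P x
        + ∑ x ∈ univ.filter (fun x => f x - μ ≤ -t), P x := hsplit
    _ ≤ Real.exp (-(2 * t ^ 2 / W)) + Real.exp (-(2 * t ^ 2 / W)) := add_le_add hup hlow
    _ = 2 * Real.exp (-(2 * t ^ 2 / W)) := by ring
    _ = 2 * Real.exp (-(2 * (op ^ 2)⁻¹ * t ^ 2) / ∑ j, (c j) ^ 2) := by rw [hfinal]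
end
end

section
/- Let X = (X_1,…,X_N) be a time-homogeneous Markov chain on 𝒜 with one-step transition kernel P and Dobrushin contraction coefficient α := max_{x,x'∈𝒜} d_TV(P(·|x), P(·|x')), and assume α ∈ (0,1). Then for any f : 𝒜^N → ℝ with sensitivity vector c and any t > 0 (assuming c ≠ 0): ℙ(|f(X) − 𝔼[f(X)]| ≥ t) ≤ 2·exp(−2t²(1−α)² / ‖c‖₂²). -/
open Finset

noncomputable section

/-- The kernel family of a time-homogeneous Markov chain with initial distribution `init`
and one-step transition kernel `P`. -/
def markovKernel {N : ℕ} {A : Type*} (init : A → ℝ) (P : A → A → ℝ) :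
    Fin N → (Fin N → A) → A → ℝ :=
  fun j x =>
    if _h : (j : ℕ) = 0 then init
    else P (x ⟨(j : ℕ) - 1, lt_of_le_of_lt (Nat.pred_le _) j.isLt⟩)

/-- The Dobrushin contraction coefficient `α = max_{x,x'} d_TV(P(·|x), P(·|x'))`. -/
def dobrushin {A : Type*} [Fintype A] (P : A → A → ℝ) : ℝ :=
  ⨆ q : A × A, dTV (P q.1) (P q.2)


open Real

lemma hoeff_core (p : ℝ) (h0 : 0 ≤ p) (h1 : p ≤ 1) (h : ℝ) :
    (1 - p) * Real.exp (-p * h) + p * Real.exp ((1 - p) * h) ≤ Real.exp (h ^ 2 / 8) := by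
  set den : ℝ → ℝ := fun s => 1 - p + p * Real.exp s with hden_def
  have hden : ∀ s, 0 < den s := by
    intro s
    have e := Real.exp_pos s
    have hds : den s = 1 - p + p * Real.exp s := rfl
    rw [hds]
    rcases eq_or_lt_of_le h1 with rfl | hp
    · linarith
    · nlinarith [mul_nonneg h0 e.le]
  set q : ℝ → ℝ := fun s => p * Real.exp s / den s with hq_def
  have hdenD : ∀ s, HasDerivAt den (p * Real.exp s) s := by
    intro s
    exact ((Real.hasDerivAt_exp s).const_mul p).const_add (1 - p)
  have hqD : ∀ s, HasDerivAt q (p * Real.exp s * (1 - p) / (den s) ^ 2) s := by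
    intro s
    have := ((Real.hasDerivAt_exp s).const_mul p).div (hdenD s) (hden s).ne'
    refine this.congr_deriv ?_
    have hds : den s = 1 - p + p * Real.exp s := rfl
    rw [hds]
    congr 1
    ring
  have hq_bound : ∀ s, |p * Real.exp s * (1 - p) / (den s) ^ 2| ≤ 1 / 4 := by
    intro s
    have hd := hden s
    have hnum : 0 ≤ p * Real.exp s * (1 - p) :=
      mul_nonneg (mul_nonneg h0 (Real.exp_pos s).le) (by linarith)
    rw [abs_of_nonneg (div_nonneg hnum (sq_nonneg _))]
    rw [div_le_iff₀ (by positivity)]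
    have : den s = (1 - p) + p * Real.exp s := rfl
    nlinarith [sq_nonneg ((1 - p) - p * Real.exp s)]
  have hq_lip : ∀ s : ℝ, |q s - p| ≤ 1 / 4 * |s| := by
    intro s
    have q0 : q 0 = p := by simp [hq_def, hden_def]
    have := Convex.norm_image_sub_le_of_norm_hasDerivWithin_le
      (f := q) (f' := fun s => p * Real.exp s * (1 - p) / (den s) ^ 2)
      (fun x _ => (hqD x).hasDerivWithinAt) (fun x _ => by
        rw [Real.norm_eq_abs]; simpa using hq_bound x) convex_univ (Set.mem_univ (0:ℝ)) (Set.mem_univ s)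
    simpa [q0, Real.norm_eq_abs] using this
  set ψ : ℝ → ℝ := fun s => s ^ 2 / 8 - (Real.log (den s) - p * s) with hψ_def
  have hψD : ∀ s, HasDerivAt ψ (s / 4 - (q s - p)) s := by
    intro s
    have hlog : HasDerivAt (fun s => Real.log (den s)) (p * Real.exp s / den s) s :=
      (hdenD s).log (hden s).ne'
    have h1' : HasDerivAt (fun s : ℝ => s ^ 2 / 8) (s / 4) s := by
      have := (hasDerivAt_pow 2 s).div_const 8
      refine this.congr_deriv ?_; norm_num; ring
    have := h1'.sub (hlog.sub ((hasDerivAt_id s).const_mul p))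
    refine this.congr_deriv ?_
    simp only [hq_def]; ring
  have hψ0 : ψ 0 = 0 := by simp [hψ_def, hden_def]
  have hψcont : Continuous ψ := by
    have : Differentiable ℝ ψ := fun s => (hψD s).differentiableAt
    exact this.continuous
  have key : ∀ h : ℝ, 0 ≤ ψ h := by
    intro h
    rcases le_total 0 h with hh | hh
    · have mono : MonotoneOn ψ (Set.Icc 0 h) := by
        apply monotoneOn_of_deriv_nonneg (convex_Icc 0 h) hψcont.continuousOn
        · intro s _
          exact (hψD s).differentiableAt.differentiableWithinAt
        · intro s hs
          rw [interior_Icc] at hs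
          rw [(hψD s).deriv]
          have := hq_lip s
          rw [abs_of_nonneg hs.1.le] at this
          have : q s - p ≤ 1 / 4 * s := (abs_le.mp this).2
          linarith
      have := mono (Set.left_mem_Icc.mpr hh) (Set.right_mem_Icc.mpr hh) hh
      linarith [hψ0]
    · have anti : AntitoneOn ψ (Set.Icc h 0) := by
        apply antitoneOn_of_deriv_nonpos (convex_Icc h 0) hψcont.continuousOn
        · intro s _
          exact (hψD s).differentiableAt.differentiableWithinAt
        · intro s hs
          rw [interior_Icc] at hs
          rw [(hψD s).deriv]
          have := hq_lip s
          rw [abs_of_nonpos hs.2.le] at this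
          have : -(1 / 4 * -s) ≤ q s - p := (abs_le.mp this).1
          linarith
      have := anti (Set.left_mem_Icc.mpr hh) (Set.right_mem_Icc.mpr hh) hh
      linarith [hψ0]
  have hφ : Real.log (den h) - p * h ≤ h ^ 2 / 8 := by have := key h; simp [hψ_def] at this; linarith
  have lhs_eq : (1 - p) * Real.exp (-p * h) + p * Real.exp ((1 - p) * h)
      = Real.exp (Real.log (den h) - p * h) := by
    rw [Real.exp_sub, Real.exp_log (hden h)]
    have : Real.exp ((1 - p) * h) = Real.exp h * Real.exp (-p * h) := by
      rw [← Real.exp_add]; ring_nf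
    rw [this]
    simp only [hden_def]
    rw [eq_div_iff (Real.exp_ne_zero _), neg_mul, Real.exp_neg]
    field_simp
  rw [lhs_eq]
  exact Real.exp_le_exp.mpr hφ

open Finset in
lemma hoeff_sum {A : Type*} [Fintype A] [Nonempty A] (p : A → ℝ)
    (h0 : ∀ a, 0 ≤ p a) (h1 : ∑ a, p a = 1) (g : A → ℝ) (D : ℝ)
    (hD : ∀ a b, |g a - g b| ≤ D) (l : ℝ) :
    ∑ a, p a * Real.exp (l * g a) ≤ Real.exp (l * (∑ a, p a * g a) + l ^ 2 * D ^ 2 / 8) := by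
  have hDnn : 0 ≤ D := le_trans (abs_nonneg _) (hD (Classical.arbitrary A) (Classical.arbitrary A))
  set μ := ∑ a, p a * g a with hμ
  obtain ⟨am, -, hm⟩ := Finset.exists_mem_eq_inf' (univ_nonempty (α := A)) g
  obtain ⟨aM, -, hM⟩ := Finset.exists_mem_eq_sup' (univ_nonempty (α := A)) g
  set m := univ.inf' univ_nonempty g with hm'
  set M := univ.sup' univ_nonempty g with hM'
  have hmle : ∀ a, m ≤ g a := fun a => inf'_le _ (mem_univ a)
  have hMle : ∀ a, g a ≤ M := fun a => le_sup' _ (mem_univ a)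
  have hmM : m ≤ M := le_trans (hmle (Classical.arbitrary A)) (hMle _)
  have hMm : M - m ≤ D := by
    rw [hM, hm]
    calc g aM - g am ≤ |g aM - g am| := le_abs_self _
    _ ≤ D := hD _ _
  have hmμ : m ≤ μ := by
    calc m = ∑ a, p a * m := by rw [← Finset.sum_mul, h1, one_mul]
    _ ≤ μ := Finset.sum_le_sum fun a _ => mul_le_mul_of_nonneg_left (hmle a) (h0 a)
  have hμM : μ ≤ M := by
    calc μ ≤ ∑ a, p a * M := Finset.sum_le_sum fun a _ => mul_le_mul_of_nonneg_left (hMle a) (h0 a)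
    _ = M := by rw [← Finset.sum_mul, h1, one_mul]
  rcases eq_or_lt_of_le hmM with heq | hlt
  · -- constant case
    have hg : ∀ a, g a = μ := by
      intro a
      have h1 := hmle a; have h2 := hMle a
      have := hmμ; have := hμM
      rw [← heq] at h2 hμM
      linarith
    calc ∑ a, p a * Real.exp (l * g a) = ∑ a, p a * Real.exp (l * μ) := by
          simp_rw [hg]
    _ = Real.exp (l * μ) := by rw [← Finset.sum_mul, h1, one_mul]
    _ ≤ _ := Real.exp_le_exp.mpr (by nlinarith [sq_nonneg l, sq_nonneg D, sq_nonneg (l*D)])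
  · have hMm' : 0 < M - m := by linarith
    have convex_step : ∀ a, Real.exp (l * g a) ≤
        (M - g a) / (M - m) * Real.exp (l * m) + (g a - m) / (M - m) * Real.exp (l * M) := by
      intro a
      have hθ1 : 0 ≤ (M - g a) / (M - m) := div_nonneg (by linarith [hMle a]) hMm'.le
      have hθ2 : 0 ≤ (g a - m) / (M - m) := div_nonneg (by linarith [hmle a]) hMm'.le
      have hθs : (M - g a) / (M - m) + (g a - m) / (M - m) = 1 := by
        field_simp; ring
      have := convexOn_exp.2 (Set.mem_univ (l * m)) (Set.mem_univ (l * M)) hθ1 hθ2 hθs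
      simp only [smul_eq_mul] at this
      have harg : (M - g a) / (M - m) * (l * m) + (g a - m) / (M - m) * (l * M) = l * g a := by
        field_simp
        ring
      rw [harg] at this
      exact this
    set C : ℝ := (M * Real.exp (l * m) - m * Real.exp (l * M)) / (M - m) with hC
    set B : ℝ := (Real.exp (l * M) - Real.exp (l * m)) / (M - m) with hB
    have expand : ∀ x : ℝ, (M - x) / (M - m) * Real.exp (l * m)
        + (x - m) / (M - m) * Real.exp (l * M) = C + x * B := by
      intro x
      rw [hC, hB]
      field_simp
      ring
    have step2 : ∑ a, p a * Real.exp (l * g a) ≤ C + μ * B := by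
      calc ∑ a, p a * Real.exp (l * g a)
          ≤ ∑ a, p a * ((M - g a) / (M - m) * Real.exp (l * m)
              + (g a - m) / (M - m) * Real.exp (l * M)) :=
            Finset.sum_le_sum fun a _ => mul_le_mul_of_nonneg_left (convex_step a) (h0 a)
      _ = ∑ a, (p a * C + (p a * g a) * B) := by
            refine Finset.sum_congr rfl fun a _ => ?_
            rw [expand (g a)]; ring
      _ = C + μ * B := by
            rw [Finset.sum_add_distrib, ← Finset.sum_mul, ← Finset.sum_mul, h1, one_mul, hμ]
    refine step2.trans ?_
    set Pp := (μ - m) / (M - m) with hPp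
    have hP0 : 0 ≤ Pp := div_nonneg (by linarith) hMm'.le
    have hP1 : Pp ≤ 1 := by rw [hPp, div_le_one hMm']; linarith
    set hh := l * (M - m) with hhh
    have key : C + μ * B = Real.exp (l * μ) *
        ((1 - Pp) * Real.exp (-Pp * hh) + Pp * Real.exp ((1 - Pp) * hh)) := by
      have hEm : l * m = l * μ + -Pp * hh := by rw [hPp, hhh]; field_simp; ring
      have hEM : l * M = l * μ + (1 - Pp) * hh := by rw [hPp, hhh]; field_simp; ring
      rw [hC, hB, hEm, hEM, Real.exp_add, Real.exp_add, hPp]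
      field_simp
      ring
    rw [key]
    calc Real.exp (l * μ) * ((1 - Pp) * Real.exp (-Pp * hh) + Pp * Real.exp ((1 - Pp) * hh))
        ≤ Real.exp (l * μ) * Real.exp (hh ^ 2 / 8) :=
          mul_le_mul_of_nonneg_left (hoeff_core Pp hP0 hP1 hh) (Real.exp_pos _).le
    _ = Real.exp (l * μ + hh ^ 2 / 8) := (Real.exp_add _ _).symm
    _ ≤ Real.exp (l * μ + l ^ 2 * D ^ 2 / 8) := by
          apply Real.exp_le_exp.mpr
          have : hh ^ 2 ≤ l ^ 2 * D ^ 2 := by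
            rw [hhh]
            have h2 : (M - m) ^ 2 ≤ D ^ 2 := by nlinarith
            nlinarith [sq_nonneg l]
          linarith

open Finset in
lemma abs_sum_osc {A : Type*} [Fintype A] [Nonempty A] (p q : A → ℝ)
    (hp1 : ∑ a, p a = 1) (hq1 : ∑ a, q a = 1) (h : A → ℝ) (D : ℝ)
    (hD : ∀ a b, |h a - h b| ≤ D) :
    |∑ a, (p a - q a) * h a| ≤ dTV p q * D := by
  obtain ⟨am, -, hm⟩ := Finset.exists_mem_eq_inf' (univ_nonempty (α := A)) h
  obtain ⟨aM, -, hM⟩ := Finset.exists_mem_eq_sup' (univ_nonempty (α := A)) h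
  set m := univ.inf' univ_nonempty h with hm'
  set M := univ.sup' univ_nonempty h with hM'
  have hmle : ∀ a, m ≤ h a := fun a => inf'_le _ (mem_univ a)
  have hMle : ∀ a, h a ≤ M := fun a => le_sup' _ (mem_univ a)
  have hMm : M - m ≤ D := by
    rw [hM, hm]
    exact le_trans (le_abs_self _) (hD _ _)
  set z := (M + m) / 2 with hz
  have hcenter : ∀ a, |h a - z| ≤ D / 2 := by
    intro a
    rw [abs_le]
    constructor
    · have := hmle a; rw [hz]; linarith
    · have := hMle a; rw [hz]; linarith
  have key : ∑ a, (p a - q a) * h a = ∑ a, (p a - q a) * (h a - z) := by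
    rw [Finset.sum_congr rfl (fun a _ => by ring :
      ∀ a ∈ univ, (p a - q a) * (h a - z) = (p a - q a) * h a - (p a - q a) * z)]
    rw [Finset.sum_sub_distrib, ← Finset.sum_mul, Finset.sum_sub_distrib, hp1, hq1]
    simp
  rw [key]
  calc |∑ a, (p a - q a) * (h a - z)| ≤ ∑ a, |(p a - q a) * (h a - z)| :=
        Finset.abs_sum_le_sum_abs _ _
  _ ≤ ∑ a, |p a - q a| * (D / 2) := by
      apply Finset.sum_le_sum
      intro a _
      rw [abs_mul]
      exact mul_le_mul_of_nonneg_left (hcenter a) (abs_nonneg _)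
  _ = dTV p q * D := by
      rw [← Finset.sum_mul, dTV]
      ring

/-- the vector `d i = ∑_{l=i}^{N-1} α^(l-i) c_l`, defined by downward recursion. -/
noncomputable def dvec (α : ℝ) (cc : ℕ → ℝ) (N : ℕ) : ℕ → ℝ := fun i =>
  if h : i < N then cc i + α * dvec α cc N (i + 1) else 0
termination_by i => N - i
decreasing_by omega

lemma dvec_eq_zero {α : ℝ} {cc : ℕ → ℝ} {N i : ℕ} (h : ¬ i < N) : dvec α cc N i = 0 := by
  rw [dvec, dif_neg h]

lemma dvec_rec {α : ℝ} {cc : ℕ → ℝ} {N i : ℕ} (h : i < N) :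
    dvec α cc N i = cc i + α * dvec α cc N (i + 1) := by
  rw [dvec, dif_pos h]

open Finset in
lemma dvec_closed {α : ℝ} {cc : ℕ → ℝ} {N : ℕ} :
    ∀ k i, N ≤ i + k → dvec α cc N i = ∑ l ∈ Finset.Ico i N, α ^ (l - i) * cc l := by
  intro k
  induction k with
  | zero =>
    intro i hi
    rw [dvec_eq_zero (by omega), Finset.Ico_eq_empty (by omega), Finset.sum_empty]
  | succ k ih =>
    intro i hi
    by_cases h : i < N
    · rw [dvec_rec h, ih (i + 1) (by omega)]
      rw [Finset.mul_sum]
      rw [Finset.sum_eq_sum_Ico_succ_bot h]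
      simp only [Nat.sub_self, pow_zero, one_mul]
      congr 1
      refine Finset.sum_congr rfl fun l hl => ?_
      rw [Finset.mem_Ico] at hl
      rw [← mul_assoc]
      congr 1
      rw [← pow_succ']
      congr 1
      omega
    · rw [dvec_eq_zero h, Finset.Ico_eq_empty (by omega), Finset.sum_empty]

lemma dvec_nonneg {α : ℝ} {cc : ℕ → ℝ} {N : ℕ} (hα : 0 ≤ α) (hcc : ∀ l, 0 ≤ cc l) :
    ∀ i, 0 ≤ dvec α cc N i := by
  intro i
  rw [dvec_closed (N - i + 1) i (by omega)]
  exact Finset.sum_nonneg fun l _ => mul_nonneg (pow_nonneg hα _) (hcc l)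

lemma cc_le_dvec {α : ℝ} {cc : ℕ → ℝ} {N : ℕ} (hα : 0 ≤ α) (hcc : ∀ l, 0 ≤ cc l)
    {i : ℕ} (h : i < N) : cc i ≤ dvec α cc N i := by
  rw [dvec_rec h]
  have := dvec_nonneg (N := N) hα hcc (i + 1)
  nlinarith

lemma geom_tail_le {α : ℝ} (hα0 : 0 ≤ α) (hα1 : α < 1) (n : ℕ) :
    ∑ k ∈ Finset.range n, α ^ k ≤ 1 / (1 - α) := by
  rw [geom_sum_eq hα1.ne n]
  have h1 : (0:ℝ) < 1 - α := by linarith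
  have : (α ^ n - 1) / (α - 1) = (1 - α ^ n) / (1 - α) := by
    rw [div_eq_div_iff (by linarith) h1.ne']
    ring
  rw [this, div_le_div_iff₀ h1 h1]
  nlinarith [pow_nonneg hα0 n]

lemma geom1 {α : ℝ} (hα0 : 0 ≤ α) (hα1 : α < 1) (i N : ℕ) :
    ∑ l ∈ Finset.Ico i N, α ^ (l - i) ≤ 1 / (1 - α) := by
  rw [Finset.sum_Ico_eq_sum_range]
  calc ∑ k ∈ Finset.range (N - i), α ^ (i + k - i)
      = ∑ k ∈ Finset.range (N - i), α ^ k :=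
        Finset.sum_congr rfl fun k _ => by congr 1; omega
  _ ≤ 1 / (1 - α) := geom_tail_le hα0 hα1 _

lemma geom2 {α : ℝ} (hα0 : 0 ≤ α) (hα1 : α < 1) {l N : ℕ} (hl : l < N) :
    ∑ i ∈ Finset.range N, (if i ≤ l then α ^ (l - i) else 0) ≤ 1 / (1 - α) := by
  have h1 : ∑ i ∈ Finset.range N, (if i ≤ l then α ^ (l - i) else 0)
      = ∑ i ∈ Finset.range (l + 1), α ^ (l - i) := by
    rw [← Finset.sum_subset (Finset.range_subset_range.mpr (by omega : l + 1 ≤ N))]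
    · exact Finset.sum_congr rfl fun i hi => if_pos (by simp at hi; omega)
    · intro i _ hi
      simp only [Finset.mem_range] at hi
      exact if_neg (by omega)
  rw [h1]
  have h2 : ∑ i ∈ Finset.range (l + 1), α ^ (l - i) = ∑ k ∈ Finset.range (l + 1), α ^ k := by
    have := Finset.sum_range_reflect (fun k => α ^ k) (l + 1)
    calc ∑ i ∈ Finset.range (l + 1), α ^ (l - i)
        = ∑ i ∈ Finset.range (l + 1), α ^ (l + 1 - 1 - i) :=
          Finset.sum_congr rfl fun i _ => by congr 1
    _ = _ := this
  rw [h2]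
  exact geom_tail_le hα0 hα1 _

lemma sum_dvec_sq_le {α : ℝ} {cc : ℕ → ℝ} {N : ℕ} (hα0 : 0 ≤ α) (hα1 : α < 1)
    (hcc : ∀ l, 0 ≤ cc l) :
    ∑ i ∈ Finset.range N, (dvec α cc N i) ^ 2
      ≤ (∑ l ∈ Finset.range N, (cc l) ^ 2) / (1 - α) ^ 2 := by
  have h1 : (0:ℝ) < 1 - α := by linarith
  have per_i : ∀ i, (dvec α cc N i) ^ 2
      ≤ (1 / (1 - α)) * ∑ l ∈ Finset.Ico i N, α ^ (l - i) * (cc l) ^ 2 := by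
    intro i
    rw [dvec_closed N i (by omega)]
    have cs := Finset.sum_mul_sq_le_sq_mul_sq (Finset.Ico i N)
      (fun l => Real.sqrt (α ^ (l - i))) (fun l => Real.sqrt (α ^ (l - i)) * cc l)
    have e1 : ∀ l, Real.sqrt (α ^ (l - i)) * (Real.sqrt (α ^ (l - i)) * cc l)
        = α ^ (l - i) * cc l := by
      intro l
      rw [← mul_assoc, Real.mul_self_sqrt (pow_nonneg hα0 _)]
    have e2 : ∀ l, Real.sqrt (α ^ (l - i)) ^ 2 = α ^ (l - i) :=
      fun l => Real.sq_sqrt (pow_nonneg hα0 _)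
    have e3 : ∀ l, (Real.sqrt (α ^ (l - i)) * cc l) ^ 2 = α ^ (l - i) * (cc l) ^ 2 := by
      intro l
      rw [mul_pow, e2]
    simp only [e1, e2, e3] at cs
    calc (∑ l ∈ Finset.Ico i N, α ^ (l - i) * cc l) ^ 2
        ≤ (∑ l ∈ Finset.Ico i N, α ^ (l - i)) * ∑ l ∈ Finset.Ico i N, α ^ (l - i) * (cc l) ^ 2 :=
          cs
    _ ≤ (1 / (1 - α)) * ∑ l ∈ Finset.Ico i N, α ^ (l - i) * (cc l) ^ 2 := by
        apply mul_le_mul_of_nonneg_right (geom1 hα0 hα1 i N)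
        exact Finset.sum_nonneg fun l _ =>
          mul_nonneg (pow_nonneg hα0 _) (sq_nonneg _)
  calc ∑ i ∈ Finset.range N, (dvec α cc N i) ^ 2
      ≤ ∑ i ∈ Finset.range N, (1 / (1 - α)) * ∑ l ∈ Finset.Ico i N, α ^ (l - i) * (cc l) ^ 2 :=
        Finset.sum_le_sum fun i _ => per_i i
  _ = (1 / (1 - α)) * ∑ i ∈ Finset.range N, ∑ l ∈ Finset.Ico i N, α ^ (l - i) * (cc l) ^ 2 := by
        rw [Finset.mul_sum]
  _ = (1 / (1 - α)) * ∑ i ∈ Finset.range N, ∑ l ∈ Finset.range N,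
        (if i ≤ l then α ^ (l - i) * (cc l) ^ 2 else 0) := by
        congr 1
        refine Finset.sum_congr rfl fun i _ => ?_
        rw [← Finset.sum_filter]
        congr 1
        ext l
        simp only [Finset.mem_Ico, Finset.mem_filter, Finset.mem_range]
        omega
  _ = (1 / (1 - α)) * ∑ l ∈ Finset.range N, ∑ i ∈ Finset.range N,
        (if i ≤ l then α ^ (l - i) * (cc l) ^ 2 else 0) := by
        rw [Finset.sum_comm]
  _ ≤ (1 / (1 - α)) * ∑ l ∈ Finset.range N, (cc l) ^ 2 * (1 / (1 - α)) := by
        apply mul_le_mul_of_nonneg_left ?_ (div_nonneg zero_le_one h1.le)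
        apply Finset.sum_le_sum
        intro l hl
        have : ∑ i ∈ Finset.range N, (if i ≤ l then α ^ (l - i) * (cc l) ^ 2 else 0)
            = (cc l) ^ 2 * ∑ i ∈ Finset.range N, (if i ≤ l then α ^ (l - i) else 0) := by
          rw [Finset.mul_sum]
          refine Finset.sum_congr rfl fun i _ => ?_
          split <;> ring
        rw [this]
        exact mul_le_mul_of_nonneg_left (geom2 hα0 hα1 (Finset.mem_range.mp hl)) (sq_nonneg _)
  _ = (∑ l ∈ Finset.range N, (cc l) ^ 2) / (1 - α) ^ 2 := by
        rw [← Finset.sum_mul]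
        have hne : (1 - α) ≠ 0 := h1.ne'
        field_simp

section Chain

variable {N : ℕ} {A : Type*} [Fintype A] [Nonempty A] [DecidableEq A]

lemma mk_nonneg (init : A → ℝ) (P : A → A → ℝ) (hinit : ∀ a, 0 ≤ init a)
    (hP : ∀ x a, 0 ≤ P x a) (j : Fin N) (x : Fin N → A) (a : A) :
    0 ≤ markovKernel init P j x a := by
  rw [markovKernel]
  split
  · exact hinit a
  · exact hP _ a

lemma mk_sum (init : A → ℝ) (P : A → A → ℝ) (hinit : ∑ a, init a = 1)
    (hP : ∀ x, ∑ a, P x a = 1) (j : Fin N) (x : Fin N → A) :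
    ∑ a, markovKernel init P j x a = 1 := by
  rw [markovKernel]
  split
  · exact hinit
  · exact hP _

lemma mk_agree (init : A → ℝ) (P : A → A → ℝ) (j : Fin N) (x y : Fin N → A)
    (h : ∀ i : Fin N, (i : ℕ) < (j : ℕ) → x i = y i) :
    markovKernel init P j x = markovKernel init P j y := by
  rw [markovKernel, markovKernel]
  split
  · rfl
  · rename_i hj
    rw [h ⟨(j : ℕ) - 1, lt_of_le_of_lt (Nat.pred_le _) j.isLt⟩
      (by show (j : ℕ) - 1 < (j : ℕ); omega)]

/-- Iterated conditional expectation: `Ex K n g` integrates out the last `n` coordinates. -/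
noncomputable def Ex (K : Fin N → (Fin N → A) → A → ℝ) :
    ℕ → ((Fin N → A) → ℝ) → (Fin N → A) → ℝ
  | 0, g, x => g x
  | n+1, g, x =>
    if h : n < N then
      ∑ a, K ⟨N - n - 1, by omega⟩ x a *
        Ex K n g (Function.update x ⟨N - n - 1, by omega⟩ a)
    else 0

lemma Ex_zero (K : Fin N → (Fin N → A) → A → ℝ) (g : (Fin N → A) → ℝ) (x : Fin N → A) :
    Ex K 0 g x = g x := rfl

lemma Ex_succ (K : Fin N → (Fin N → A) → A → ℝ) {n : ℕ} (h : n < N)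
    (g : (Fin N → A) → ℝ) (x : Fin N → A) :
    Ex K (n + 1) g x = ∑ a, K ⟨N - n - 1, by omega⟩ x a *
        Ex K n g (Function.update x ⟨N - n - 1, by omega⟩ a) := by
  rw [Ex, dif_pos h]

lemma Ex_eq_sum (init : A → ℝ) (P : A → A → ℝ) :
    ∀ n, n ≤ N → ∀ (g : (Fin N → A) → ℝ) (x : Fin N → A),
    Ex (markovKernel init P) n g x =
      ∑ y ∈ Finset.univ.filter (fun y : Fin N → A => ∀ i : Fin N, (i : ℕ) < N - n → y i = x i),
        (∏ m ∈ Finset.univ.filter (fun m : Fin N => N - n ≤ (m : ℕ)),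
          markovKernel init P m y (y m)) * g y := by
  intro n
  induction n with
  | zero =>
    intro _ g x
    have h1 : Finset.univ.filter (fun y : Fin N → A => ∀ i : Fin N, (i : ℕ) < N - 0 → y i = x i)
        = {x} := by
      ext y
      simp only [Finset.mem_filter, Finset.mem_univ, true_and, Finset.mem_singleton,
        Nat.sub_zero]
      constructor
      · intro h; funext i; exact h i i.isLt
      · rintro rfl i _; rfl
    have h2 : Finset.univ.filter (fun m : Fin N => N - 0 ≤ (m : ℕ)) = ∅ :=
      Finset.filter_false_of_mem fun m _ => by omega
    rw [h1, h2, Finset.sum_singleton, Finset.prod_empty, one_mul, Ex_zero]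
  | succ n ih =>
    intro hn g x
    have hnN : n < N := by omega
    set j : ℕ := N - n - 1 with hjdef
    have hj1 : N - (n + 1) = j := by omega
    have hj2 : N - n = j + 1 := by omega
    set jF : Fin N := ⟨j, by omega⟩ with hjF
    rw [Ex_succ _ hnN]
    set F : (Fin N → A) → ℝ := fun y =>
      (∏ m ∈ Finset.univ.filter (fun m : Fin N => N - (n+1) ≤ (m : ℕ)),
        markovKernel init P m y (y m)) * g y with hF
    rw [← Finset.sum_fiberwise
      (Finset.univ.filter (fun y : Fin N → A => ∀ i : Fin N, (i : ℕ) < N - (n+1) → y i = x i))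
      (fun y => y jF) F]
    refine Finset.sum_congr rfl fun b _ => ?_
    -- identify the fiber
    have hfib : (Finset.univ.filter
          (fun y : Fin N → A => ∀ i : Fin N, (i : ℕ) < N - (n+1) → y i = x i)).filter
          (fun y => y jF = b)
        = Finset.univ.filter (fun y : Fin N → A =>
            ∀ i : Fin N, (i : ℕ) < N - n → y i = Function.update x jF b i) := by
      ext y
      simp only [Finset.mem_filter, Finset.mem_univ, true_and, hj1, hj2]
      constructor
      · rintro ⟨h1, h2⟩ i hi
        rcases Nat.lt_succ_iff_lt_or_eq.mp hi with hi' | hi'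
        · rw [h1 i hi', Function.update_of_ne (by simp [hjF, Fin.ext_iff]; omega)]
        · have : i = jF := by simp [hjF, Fin.ext_iff]; omega
          rw [this, h2, Function.update_self]
      · intro h
        constructor
        · intro i hi
          rw [h i (by omega), Function.update_of_ne (by simp [hjF, Fin.ext_iff]; omega)]
        · rw [h jF (by simp [hjF]), Function.update_self]
    rw [hfib]
    -- split the product at m = jF
    have hsplit : Finset.univ.filter (fun m : Fin N => N - (n+1) ≤ (m : ℕ))
        = insert jF (Finset.univ.filter (fun m : Fin N => N - n ≤ (m : ℕ))) := by
      ext m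
      simp only [Finset.mem_filter, Finset.mem_univ, true_and, Finset.mem_insert, hj1, hj2,
        hjF, Fin.ext_iff]
      omega
    have hnotmem : jF ∉ Finset.univ.filter (fun m : Fin N => N - n ≤ (m : ℕ)) := by
      simp only [Finset.mem_filter, Finset.mem_univ, true_and, hj2, hjF]
      omega
    have hFval : ∀ y ∈ Finset.univ.filter (fun y : Fin N → A =>
        ∀ i : Fin N, (i : ℕ) < N - n → y i = Function.update x jF b i),
        F y = markovKernel init P jF x b *
          ((∏ m ∈ Finset.univ.filter (fun m : Fin N => N - n ≤ (m : ℕ)),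
            markovKernel init P m y (y m)) * g y) := by
      intro y hy
      simp only [Finset.mem_filter, Finset.mem_univ, true_and] at hy
      have hyj : y jF = b := by
        rw [hy jF (by simp [hjF]; omega), Function.update_self]
      have hagree : markovKernel init P jF y = markovKernel init P jF x := by
        apply mk_agree
        intro i hi
        have hv : (jF : ℕ) = j := rfl
        rw [hy i (by omega), Function.update_of_ne (Fin.ne_of_lt hi)]
      rw [hF]
      simp only
      rw [hsplit, Finset.prod_insert hnotmem, hyj, hagree]
      ring
    rw [Finset.sum_congr rfl hFval, ← Finset.mul_sum]
    congr 1
    rw [ih (by omega) g (Function.update x jF b)]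

end Chain

section Osc

variable {N : ℕ} {A : Type*} [Fintype A] [Nonempty A] [DecidableEq A]

lemma dTV_nonneg_s3 (p q : A → ℝ) : 0 ≤ dTV p q :=
  div_nonneg (Finset.sum_nonneg fun a _ => abs_nonneg _) (by norm_num)

lemma dTV_le_dob (P : A → A → ℝ) (u v : A) : dTV (P u) (P v) ≤ dobrushin P := by
  rw [dobrushin]
  exact le_ciSup (f := fun q : A × A => dTV (P q.1) (P q.2))
    (Set.Finite.bddAbove (Set.finite_range _)) (u, v)

lemma dob_nonneg (P : A → A → ℝ) : 0 ≤ dobrushin P := by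
  have h := dTV_le_dob P (Classical.arbitrary A) (Classical.arbitrary A)
  exact le_trans (dTV_nonneg_s3 _ _) h

lemma osc_lemma (init : A → ℝ) (P : A → A → ℝ)
    (hP0 : ∀ x a, 0 ≤ P x a) (hP1 : ∀ x, ∑ a, P x a = 1)
    (hinit0 : ∀ a, 0 ≤ init a) (hinit1 : ∑ a, init a = 1)
    (f : (Fin N → A) → ℝ) (cc : ℕ → ℝ) (hcc0 : ∀ l, 0 ≤ cc l)
    (hsens : ∀ (x y : Fin N → A) (i : Fin N),
      (∀ m, m ≠ i → x m = y m) → |f x - f y| ≤ cc (i : ℕ)) :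
    ∀ n, n ≤ N → ∀ (i : Fin N), (i : ℕ) < N - n → ∀ x y : Fin N → A,
      (∀ m : Fin N, (m : ℕ) < N - n → m ≠ i → x m = y m) →
      |Ex (markovKernel init P) n f x - Ex (markovKernel init P) n f y| ≤
        (if (i : ℕ) = N - n - 1 then dvec (dobrushin P) cc N (i : ℕ) else cc (i : ℕ)) := by
  have hα0 : 0 ≤ dobrushin P := dob_nonneg P
  intro n
  induction n with
  | zero =>
    intro _ i hi x y hxy
    rw [Ex_zero, Ex_zero]
    have hb := hsens x y i (fun m hm => hxy m m.isLt hm)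
    split
    · exact hb.trans (cc_le_dvec hα0 hcc0 (by omega))
    · exact hb
  | succ n ih =>
    intro hn i hi x y hxy
    have hnN : n < N := by omega
    set j : ℕ := N - n - 1 with hjdef
    set jF : Fin N := ⟨j, by omega⟩ with hjF
    have hvj : (jF : ℕ) = j := rfl
    have hij : (i : ℕ) < j := by omega
    rw [Ex_succ _ hnN, Ex_succ _ hnN]
    set K := markovKernel init P with hK
    set G : A → ℝ := fun a => Ex K n f (Function.update x jF a) with hG
    set H : A → ℝ := fun a => Ex K n f (Function.update y jF a) with hH
    have hK0 : ∀ (z : Fin N → A) a, 0 ≤ K jF z a := fun z a => mk_nonneg init P hinit0 hP0 jF z a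
    have hK1 : ∀ z : Fin N → A, ∑ a, K jF z a = 1 := fun z => mk_sum init P hinit1 hP1 jF z
    have decomp : (∑ a, K jF x a * G a) - (∑ a, K jF y a * H a)
        = (∑ a, K jF x a * (G a - H a)) + (∑ a, (K jF x a - K jF y a) * H a) := by
      rw [← Finset.sum_sub_distrib, ← Finset.sum_add_distrib]
      exact Finset.sum_congr rfl fun a _ => by ring
    have hGH : ∀ a, |G a - H a| ≤ cc (i : ℕ) := by
      intro a
      have := ih (by omega) i (by omega) (Function.update x jF a) (Function.update y jF a)
        (fun m hm hmi => by
          by_cases hmj : m = jF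
          · rw [hmj, Function.update_self, Function.update_self]
          · rw [Function.update_of_ne hmj, Function.update_of_ne hmj]
            exact hxy m (by
              have : (m : ℕ) ≠ j := fun he => hmj (Fin.ext (by omega))
              omega) hmi)
      rw [if_neg (by omega)] at this
      exact this
    have term1 : |∑ a, K jF x a * (G a - H a)| ≤ cc (i : ℕ) := by
      calc |∑ a, K jF x a * (G a - H a)| ≤ ∑ a, |K jF x a * (G a - H a)| :=
            Finset.abs_sum_le_sum_abs _ _
      _ = ∑ a, K jF x a * |G a - H a| := by
          refine Finset.sum_congr rfl fun a _ => ?_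
          rw [abs_mul, abs_of_nonneg (hK0 x a)]
      _ ≤ ∑ a, K jF x a * cc (i : ℕ) :=
          Finset.sum_le_sum fun a _ => mul_le_mul_of_nonneg_left (hGH a) (hK0 x a)
      _ = cc (i : ℕ) := by rw [← Finset.sum_mul, hK1, one_mul]
    rw [decomp]
    by_cases hcase : (i : ℕ) = j - 1
    · -- the hard case: kernels differ
      have hj1 : 1 ≤ j := by omega
      have hiF : (⟨j - 1, by omega⟩ : Fin N) = i := Fin.ext (by show j - 1 = (i : ℕ); omega)
      have hKx : K jF x = P (x i) := by
        rw [hK, markovKernel, dif_neg (by rw [hvj]; omega)]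
        congr 1
        rw [← hiF]
      have hKy : K jF y = P (y i) := by
        rw [hK, markovKernel, dif_neg (by rw [hvj]; omega)]
        congr 1
        rw [← hiF]
      have hHosc : ∀ a b, |H a - H b| ≤ dvec (dobrushin P) cc N j := by
        intro a b
        have := ih (by omega) jF (by omega) (Function.update y jF a) (Function.update y jF b)
          (fun m hm hmj => by
            rw [Function.update_of_ne hmj, Function.update_of_ne hmj])
        rw [if_pos (by omega)] at this
        exact this
      have term2 : |∑ a, (K jF x a - K jF y a) * H a|
          ≤ dobrushin P * dvec (dobrushin P) cc N j := by
        calc |∑ a, (K jF x a - K jF y a) * H a|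
            ≤ dTV (K jF x) (K jF y) * dvec (dobrushin P) cc N j :=
              abs_sum_osc _ _ (hK1 x) (hK1 y) H _ hHosc
        _ ≤ dobrushin P * dvec (dobrushin P) cc N j := by
              apply mul_le_mul_of_nonneg_right ?_ (dvec_nonneg hα0 hcc0 j)
              rw [hKx, hKy]
              exact dTV_le_dob P (x i) (y i)
      rw [if_pos (by omega)]
      have hrec : dvec (dobrushin P) cc N (i : ℕ)
          = cc (i : ℕ) + dobrushin P * dvec (dobrushin P) cc N j := by
        have hij1 : (i : ℕ) + 1 = j := by omega
        rw [dvec_rec (by omega : (i : ℕ) < N), hij1]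
      rw [hrec]
      calc |(∑ a, K jF x a * (G a - H a)) + ∑ a, (K jF x a - K jF y a) * H a|
          ≤ |∑ a, K jF x a * (G a - H a)| + |∑ a, (K jF x a - K jF y a) * H a| := abs_add_le _ _
      _ ≤ cc (i : ℕ) + dobrushin P * dvec (dobrushin P) cc N j := add_le_add term1 term2
    · -- kernels agree
      have hj1 : 1 ≤ j := by omega
      have hxy' : x ⟨j - 1, by omega⟩ = y ⟨j - 1, by omega⟩ := by
        apply hxy ⟨j - 1, by omega⟩ (by show j - 1 < N - (n+1); omega)
        intro he
        exact hcase (by rw [← he])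
      have hKxy : K jF x = K jF y := by
        rw [hK, markovKernel, markovKernel, dif_neg (by rw [hvj]; omega),
          dif_neg (by rw [hvj]; omega)]
        exact congrArg P hxy'
      have hz : (∑ a, (K jF x a - K jF y a) * H a) = 0 := by
        rw [hKxy]
        simp
      rw [hz, add_zero, if_neg (by omega)]
      exact term1

end Osc

section Mgf

variable {N : ℕ} {A : Type*} [Fintype A] [Nonempty A] [DecidableEq A]

lemma sum_ite_split {j N : ℕ} (hj : j < N) (u : ℕ → ℝ) :
    (∑ m ∈ Finset.range N, if j ≤ m then u m else 0)
      = u j + ∑ m ∈ Finset.range N, if j + 1 ≤ m then u m else 0 := by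
  have key : ∀ m ∈ Finset.range N, (if j ≤ m then u m else 0)
      = (if m = j then u m else 0) + (if j + 1 ≤ m then u m else 0) := by
    intro m _
    rcases lt_trichotomy m j with h | h | h
    · rw [if_neg (by omega), if_neg (by omega), if_neg (by omega)]; ring
    · subst h
      rw [if_pos le_rfl, if_pos rfl, if_neg (by omega)]; ring
    · rw [if_pos (by omega), if_neg (by omega), if_pos (by omega)]; ring
  rw [Finset.sum_congr rfl key, Finset.sum_add_distrib]
  congr 1
  rw [Finset.sum_ite_eq' (Finset.range N) j u]
  exact if_pos (Finset.mem_range.mpr hj)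

lemma mgf_lemma (init : A → ℝ) (P : A → A → ℝ)
    (hP0 : ∀ x a, 0 ≤ P x a) (hP1 : ∀ x, ∑ a, P x a = 1)
    (hinit0 : ∀ a, 0 ≤ init a) (hinit1 : ∑ a, init a = 1)
    (f : (Fin N → A) → ℝ) (cc : ℕ → ℝ) (hcc0 : ∀ l, 0 ≤ cc l)
    (hsens : ∀ (x y : Fin N → A) (i : Fin N),
      (∀ m, m ≠ i → x m = y m) → |f x - f y| ≤ cc (i : ℕ)) (l : ℝ) :
    ∀ n, n ≤ N → ∀ x, Ex (markovKernel init P) n (fun y => Real.exp (l * f y)) x ≤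
      Real.exp (l * Ex (markovKernel init P) n f x +
        l ^ 2 * (∑ m ∈ Finset.range N,
          if N - n ≤ m then dvec (dobrushin P) cc N m ^ 2 else 0) / 8) := by
  intro n
  induction n with
  | zero =>
    intro _ x
    have hS : (∑ m ∈ Finset.range N,
        if N - 0 ≤ m then dvec (dobrushin P) cc N m ^ 2 else 0) = 0 :=
      Finset.sum_eq_zero fun m hm => if_neg (by simp at hm; omega)
    rw [hS, Ex_zero, Ex_zero]
    apply le_of_eq
    congr 1
    ring
  | succ n ih =>
    intro hn x
    have hnN : n < N := by omega
    set j : ℕ := N - n - 1 with hjdef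
    set jF : Fin N := ⟨j, by omega⟩ with hjF
    have hvj : (jF : ℕ) = j := rfl
    set K := markovKernel init P with hK
    set α := dobrushin P with hα
    set G : A → ℝ := fun a => Ex K n f (Function.update x jF a) with hG
    set S : ℝ := ∑ m ∈ Finset.range N, if N - n ≤ m then dvec α cc N m ^ 2 else 0 with hS
    have hK0 : ∀ a, 0 ≤ K jF x a := fun a => mk_nonneg init P hinit0 hP0 jF x a
    have hK1 : ∑ a, K jF x a = 1 := mk_sum init P hinit1 hP1 jF x
    have hsplit : (∑ m ∈ Finset.range N,
        if N - (n + 1) ≤ m then dvec α cc N m ^ 2 else 0)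
        = dvec α cc N j ^ 2 + S := by
      rw [hS]
      have h1 : N - (n + 1) = j := by omega
      have h2 : N - n = j + 1 := by omega
      rw [h1, h2]
      exact sum_ite_split (by omega) _
    have hD : ∀ a b, |G a - G b| ≤ dvec α cc N j := by
      intro a b
      have := osc_lemma init P hP0 hP1 hinit0 hinit1 f cc hcc0 hsens n (by omega) jF
        (by omega) (Function.update x jF a) (Function.update x jF b)
        (fun m hm hmj => by rw [Function.update_of_ne hmj, Function.update_of_ne hmj])
      rw [if_pos (by omega)] at this
      exact this
    rw [Ex_succ _ hnN, Ex_succ _ hnN, hsplit]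
    calc ∑ a, K jF x a * Ex K n (fun y => Real.exp (l * f y)) (Function.update x jF a)
        ≤ ∑ a, K jF x a * Real.exp (l * G a + l ^ 2 * S / 8) :=
          Finset.sum_le_sum fun a _ =>
            mul_le_mul_of_nonneg_left (ih (by omega) (Function.update x jF a)) (hK0 a)
    _ = (∑ a, K jF x a * Real.exp (l * G a)) * Real.exp (l ^ 2 * S / 8) := by
        rw [Finset.sum_mul]
        exact Finset.sum_congr rfl fun a _ => by rw [Real.exp_add]; ring
    _ ≤ Real.exp (l * (∑ a, K jF x a * G a) + l ^ 2 * dvec α cc N j ^ 2 / 8)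
          * Real.exp (l ^ 2 * S / 8) :=
        mul_le_mul_of_nonneg_right (hoeff_sum (fun a => K jF x a) hK0 hK1 G _ hD l)
          (Real.exp_pos _).le
    _ = Real.exp (l * (∑ a, K jF x a * G a)
          + l ^ 2 * (dvec α cc N j ^ 2 + S) / 8) := by
        rw [← Real.exp_add]
        congr 1
        ring

end Mgf

section Tail

variable {N : ℕ} {A : Type*} [Fintype A] [Nonempty A] [DecidableEq A]

lemma jointLaw_nonneg (init : A → ℝ) (P : A → A → ℝ)
    (hinit0 : ∀ a, 0 ≤ init a) (hP0 : ∀ x a, 0 ≤ P x a) (x : Fin N → A) :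
    0 ≤ jointLaw (markovKernel init P) x :=
  Finset.prod_nonneg fun j _ => mk_nonneg init P hinit0 hP0 j x (x j)

lemma Ex_top_eq (init : A → ℝ) (P : A → A → ℝ) (g : (Fin N → A) → ℝ) (x₀ : Fin N → A) :
    Ex (markovKernel init P) N g x₀ = ∑ y, jointLaw (markovKernel init P) y * g y := by
  rw [Ex_eq_sum init P N le_rfl g x₀]
  have h1 : Finset.univ.filter (fun y : Fin N → A => ∀ i : Fin N, (i : ℕ) < N - N → y i = x₀ i)
      = Finset.univ := Finset.filter_true_of_mem fun y _ => fun i hi => by omega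
  have h2 : Finset.univ.filter (fun m : Fin N => N - N ≤ (m : ℕ)) = Finset.univ :=
    Finset.filter_true_of_mem fun m _ => by omega
  rw [h1, h2]
  exact Finset.sum_congr rfl fun y _ => by rw [jointLaw]

lemma tail_one_side (init : A → ℝ) (P : A → A → ℝ)
    (hP0 : ∀ x a, 0 ≤ P x a) (hP1 : ∀ x, ∑ a, P x a = 1)
    (hinit0 : ∀ a, 0 ≤ init a) (hinit1 : ∑ a, init a = 1)
    (f : (Fin N → A) → ℝ) (cc : ℕ → ℝ) (hcc0 : ∀ l, 0 ≤ cc l)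
    (hsens : ∀ (x y : Fin N → A) (i : Fin N),
      (∀ m, m ≠ i → x m = y m) → |f x - f y| ≤ cc (i : ℕ))
    (t : ℝ) (ht : 0 < t)
    (hS : 0 < ∑ m ∈ Finset.range N, dvec (dobrushin P) cc N m ^ 2) :
    ∑ x ∈ Finset.univ.filter
        (fun x => t ≤ f x - expVal (jointLaw (markovKernel init P)) f),
      jointLaw (markovKernel init P) x ≤
      Real.exp (-2 * t ^ 2 / ∑ m ∈ Finset.range N, dvec (dobrushin P) cc N m ^ 2) := by
  set K := markovKernel init P with hK
  set α := dobrushin P with hα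
  set S : ℝ := ∑ m ∈ Finset.range N, dvec α cc N m ^ 2 with hSdef
  set L := jointLaw K with hL
  set μ := expVal L f with hμdef
  have hL0 : ∀ x, 0 ≤ L x := jointLaw_nonneg init P hinit0 hP0
  obtain ⟨x₀⟩ := (inferInstance : Nonempty A)
  set z₀ : Fin N → A := fun _ => x₀ with hz₀
  have hμ : μ = Ex K N f z₀ := by
    rw [hμdef, Ex_top_eq init P f z₀, expVal]
  set l : ℝ := 4 * t / S with hldef
  have hl : 0 < l := by positivity
  have hmgf : ∑ y, L y * Real.exp (l * f y) ≤ Real.exp (l * μ + l ^ 2 * S / 8) := by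
    have := mgf_lemma init P hP0 hP1 hinit0 hinit1 f cc hcc0 hsens l N le_rfl z₀
    rw [← Ex_top_eq init P _ z₀]
    have heq : (∑ m ∈ Finset.range N, if N - N ≤ m then dvec α cc N m ^ 2 else 0) = S := by
      rw [hSdef]
      exact Finset.sum_congr rfl fun m _ => if_pos (by omega)
    rw [heq, ← hμ] at this
    exact this
  have step1 : ∑ x ∈ Finset.univ.filter (fun x => t ≤ f x - μ), L x
      ≤ ∑ x, L x * Real.exp (l * (f x - μ - t)) := by
    calc ∑ x ∈ Finset.univ.filter (fun x => t ≤ f x - μ), L x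
        ≤ ∑ x ∈ Finset.univ.filter (fun x => t ≤ f x - μ), L x * Real.exp (l * (f x - μ - t)) := by
          apply Finset.sum_le_sum
          intro x hx
          simp only [Finset.mem_filter] at hx
          have : (1:ℝ) ≤ Real.exp (l * (f x - μ - t)) :=
            Real.one_le_exp (mul_nonneg hl.le (by linarith [hx.2]))
          nlinarith [hL0 x]
    _ ≤ ∑ x, L x * Real.exp (l * (f x - μ - t)) :=
        Finset.sum_le_sum_of_subset_of_nonneg (Finset.filter_subset _ _)
          (fun x _ _ => mul_nonneg (hL0 x) (Real.exp_pos _).le)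
  have step2 : ∑ x, L x * Real.exp (l * (f x - μ - t))
      = (∑ x, L x * Real.exp (l * f x)) * Real.exp (-(l * (μ + t))) := by
    rw [Finset.sum_mul]
    refine Finset.sum_congr rfl fun x _ => ?_
    rw [mul_assoc, ← Real.exp_add]
    congr 2
    ring
  have step3 : (∑ x, L x * Real.exp (l * f x)) * Real.exp (-(l * (μ + t)))
      ≤ Real.exp (l * μ + l ^ 2 * S / 8) * Real.exp (-(l * (μ + t))) :=
    mul_le_mul_of_nonneg_right hmgf (Real.exp_pos _).le
  have step4 : Real.exp (l * μ + l ^ 2 * S / 8) * Real.exp (-(l * (μ + t)))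
      = Real.exp (-2 * t ^ 2 / S) := by
    rw [← Real.exp_add]
    congr 1
    rw [hldef]
    field_simp
    ring
  calc ∑ x ∈ Finset.univ.filter (fun x => t ≤ f x - μ), L x
      ≤ ∑ x, L x * Real.exp (l * (f x - μ - t)) := step1
  _ = (∑ x, L x * Real.exp (l * f x)) * Real.exp (-(l * (μ + t))) := step2
  _ ≤ Real.exp (l * μ + l ^ 2 * S / 8) * Real.exp (-(l * (μ + t))) := step3
  _ = Real.exp (-2 * t ^ 2 / S) := step4

end Tail

/-- **Concentration for contracting Markov chains** (Proposition 4.1):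
`ℙ(|f(X) - 𝔼 f(X)| ≥ t) ≤ 2 exp(-2t²(1-α)² / ‖c‖₂²)`. -/
theorem markov_chain_concentration
    {N : ℕ} (hN : 1 ≤ N) {A : Type*} [Fintype A] [Nonempty A] [DecidableEq A]
    (init : A → ℝ) (hinit : (∀ a, 0 ≤ init a) ∧ ∑ a, init a = 1)
    (P : A → A → ℝ) (hP : ∀ x, (∀ a, 0 ≤ P x a) ∧ ∑ a, P x a = 1)
    (hα : 0 < dobrushin P ∧ dobrushin P < 1)
    (f : (Fin N → A) → ℝ) (c : Fin N → ℝ) (hf : HasSensitivity f c)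
    (hc : c ≠ 0) (t : ℝ) (ht : 0 < t) :
    ∑ x ∈ univ.filter
        (fun x => t ≤ |f x - expVal (jointLaw (markovKernel init P)) f|),
        jointLaw (markovKernel init P) x ≤
      2 * Real.exp (-(2 * t ^ 2 * (1 - dobrushin P) ^ 2) / ∑ j, (c j) ^ 2) := by
  obtain ⟨hinit0, hinit1⟩ := hinit
  have hP0 : ∀ x a, 0 ≤ P x a := fun x => (hP x).1
  have hP1 : ∀ x, ∑ a, P x a = 1 := fun x => (hP x).2
  have hα0 : 0 ≤ dobrushin P := dob_nonneg P
  have hα1 : dobrushin P < 1 := hα.2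
  set α := dobrushin P with hαdef
  set cc : ℕ → ℝ := fun l => if h : l < N then c ⟨l, h⟩ else 0 with hccdef
  have hcc0 : ∀ l, 0 ≤ cc l := by
    intro l
    rw [hccdef]
    dsimp only
    split
    · exact hf.1 _
    · exact le_rfl
  have hccFin : ∀ i : Fin N, cc (i : ℕ) = c i := by
    intro i
    rw [hccdef]
    dsimp only
    rw [dif_pos i.isLt, Fin.eta]
  have hsens : ∀ (x y : Fin N → A) (i : Fin N),
      (∀ m, m ≠ i → x m = y m) → |f x - f y| ≤ cc (i : ℕ) := by
    intro x y i hxy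
    rw [hccFin i]
    refine (hf.2 x y).trans ?_
    have key : ∀ j ∈ Finset.univ, (if x j ≠ y j then c j else 0)
        = if j = i then (if x j ≠ y j then c j else 0) else 0 := by
      intro j _
      by_cases hj : j = i
      · rw [if_pos hj]
      · rw [if_neg hj, if_neg (not_not_intro (hxy j hj))]
    rw [Finset.sum_congr rfl key, Finset.sum_ite_eq' Finset.univ i _, if_pos (Finset.mem_univ i)]
    split
    · exact le_rfl
    · exact hf.1 i
  have hsens' : ∀ (x y : Fin N → A) (i : Fin N),
      (∀ m, m ≠ i → x m = y m) → |(fun z => -f z) x - (fun z => -f z) y| ≤ cc (i : ℕ) := by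
    intro x y i hxy
    have : (fun z => -f z) x - (fun z => -f z) y = f y - f x := by simp; ring
    rw [this, abs_sub_comm]
    exact hsens x y i hxy
  set S : ℝ := ∑ m ∈ Finset.range N, dvec α cc N m ^ 2 with hSdef
  have hScc : ∑ m ∈ Finset.range N, cc m ^ 2 = ∑ j, (c j) ^ 2 := by
    rw [← Fin.sum_univ_eq_sum_range (fun m => cc m ^ 2) N]
    exact Finset.sum_congr rfl fun i _ => by rw [hccFin]
  have hSc_pos : 0 < ∑ j, (c j) ^ 2 := by
    obtain ⟨j, hj⟩ := Function.ne_iff.mp hc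
    exact Finset.sum_pos' (fun i _ => sq_nonneg _) ⟨j, Finset.mem_univ j, pow_two_pos_of_ne_zero hj⟩
  have hS_ge : ∑ m ∈ Finset.range N, cc m ^ 2 ≤ S :=
    Finset.sum_le_sum fun m hm =>
      pow_le_pow_left₀ (hcc0 m) (cc_le_dvec hα0 hcc0 (Finset.mem_range.mp hm)) 2
  have hS : 0 < S := lt_of_lt_of_le (by rw [hScc]; exact hSc_pos) hS_ge
  have hSle : S ≤ (∑ j, (c j) ^ 2) / (1 - α) ^ 2 := by
    rw [← hScc]
    exact sum_dvec_sq_le hα0 hα1 hcc0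
  have h1α : 0 < 1 - α := by linarith
  have hkey : S * (1 - α) ^ 2 ≤ ∑ j, (c j) ^ 2 := by
    have := mul_le_mul_of_nonneg_right hSle (sq_nonneg (1 - α))
    rwa [div_mul_cancel₀ _ (pow_ne_zero 2 h1α.ne')] at this
  have hboundexp : Real.exp (-2 * t ^ 2 / S)
      ≤ Real.exp (-(2 * t ^ 2 * (1 - α) ^ 2) / ∑ j, (c j) ^ 2) := by
    apply Real.exp_le_exp.mpr
    rw [neg_div, show (-2:ℝ) * t ^ 2 / S = -(2 * t ^ 2 / S) from by ring,
      neg_le_neg_iff, div_le_div_iff₀ hSc_pos hS]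
    nlinarith [sq_nonneg t, ht.le, sq_nonneg (1 - α)]
  set L := jointLaw (markovKernel (N := N) init P) with hLdef
  set μ := expVal L f with hμdef
  have hμneg : expVal L (fun x => -f x) = -μ := by
    rw [hμdef, expVal, expVal, ← Finset.sum_neg_distrib]
    exact Finset.sum_congr rfl fun x _ => by ring
  have T1 := tail_one_side init P hP0 hP1 hinit0 hinit1 f cc hcc0 hsens t ht hS
  have T2 := tail_one_side init P hP0 hP1 hinit0 hinit1 (fun z => -f z) cc hcc0 hsens' t ht hS
  have hT2filt : Finset.univ.filter (fun x => t ≤ -(f x - μ))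
      = Finset.univ.filter
        (fun x => t ≤ (fun z => -f z) x - expVal (jointLaw (markovKernel init P)) (fun z => -f z)) := by
    apply Finset.filter_congr
    intro x _
    rw [← hLdef, hμneg]
    show t ≤ -(f x - μ) ↔ t ≤ -f x - -μ
    constructor <;> (intro h; linarith)
  have hsplit : Finset.univ.filter (fun x => t ≤ |f x - μ|)
      = Finset.univ.filter (fun x => t ≤ f x - μ)
        ∪ Finset.univ.filter (fun x => t ≤ -(f x - μ)) := by
    rw [← Finset.filter_or]
    exact Finset.filter_congr fun x _ => by rw [le_abs]
  have hdisj : Disjoint (Finset.univ.filter (fun x => t ≤ f x - μ))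
      (Finset.univ.filter (fun x => t ≤ -(f x - μ))) := by
    rw [Finset.disjoint_left]
    intro x h1 h2
    simp only [Finset.mem_filter] at h1 h2
    linarith [h1.2, h2.2]
  rw [hsplit, Finset.sum_union hdisj]
  have hT2' : ∑ x ∈ Finset.univ.filter (fun x => t ≤ -(f x - μ)), L x
      ≤ Real.exp (-2 * t ^ 2 / S) := by
    rw [hT2filt]
    exact T2
  calc (∑ x ∈ Finset.univ.filter (fun x => t ≤ f x - μ), L x)
        + ∑ x ∈ Finset.univ.filter (fun x => t ≤ -(f x - μ)), L x
      ≤ Real.exp (-(2 * t ^ 2 * (1 - α) ^ 2) / ∑ j, (c j) ^ 2)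
        + Real.exp (-(2 * t ^ 2 * (1 - α) ^ 2) / ∑ j, (c j) ^ 2) :=
        add_le_add (T1.trans hboundexp) (hT2'.trans hboundexp)
  _ = 2 * Real.exp (-(2 * t ^ 2 * (1 - α) ^ 2) / ∑ j, (c j) ^ 2) := by ring
end
end
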